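/- arXiv:2304.01479 — 6 statements merged into one kernel-verified Lean document; each statement's English description precedes it below -/
import Mathlib

section
/- Let K ⊂ ℝ^d be compact and let X, Y be K-valued random variables with laws P_X, P_Y. Then P_X = P_Y if and only if the moment generating tensor series coincide: E[exp_⊗(X)] = E[exp_⊗(Y)], where exp_⊗(x) = ∑_{n≥0} x^{⊗n}/n! is the tensor exponential valued in the Hilbert space of square-summable tensor sequences. -/
open MeasureTheory

section Aux

variable {d : ℕ}

/-- Monomial as a product over a word. -/
lemma monomial_eq_word_prod (f : Fin d →₀ ℕ) (x : EuclideanSpace ℝ (Fin d)) :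
    (∏ k, x k ^ f k) =
      ∏ j : Fin (f.toMultiset.toList.length), x (f.toMultiset.toList.get j) := by
  classical
  have h1 : (∏ k, x k ^ f k) = ∏ k ∈ f.support, x k ^ f k := by
    refine (Finset.prod_subset (Finset.subset_univ _) ?_).symm
    intro k _ hk
    simp [Finsupp.notMem_support_iff.mp hk]
  have h2 : (f.toMultiset.map x).prod = ∏ k ∈ f.toMultiset.toFinset, x k ^ f.toMultiset.count k :=
    Finset.prod_multiset_map_count _ _
  have h3 : f.toMultiset.toFinset = f.support := Finsupp.toFinset_toMultiset f
  have h4 : ∀ k, f.toMultiset.count k = f k := Finsupp.count_toMultiset f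
  have h5 : (f.toMultiset.map x).prod = ∏ k ∈ f.support, x k ^ f k := by
    rw [h2, h3]; exact Finset.prod_congr rfl fun k _ => by rw [h4]
  rw [h1, ← h5]
  set l := f.toMultiset.toList with hl
  have h6 : f.toMultiset = (l : Multiset (Fin d)) := (Multiset.coe_toList _).symm
  have h7 : l = List.ofFn l.get := (List.ofFn_get l).symm
  conv_lhs => rw [h6]
  calc ((l : Multiset (Fin d)).map x).prod = (l.map x).prod := by
        simp [Multiset.map_coe]
    _ = ((List.ofFn l.get).map x).prod := by rw [← h7]
    _ = (List.ofFn (x ∘ l.get)).prod := by rw [List.map_ofFn]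
    _ = ∏ j : Fin l.length, x (l.get j) := by rw [List.prod_ofFn]; rfl

end Aux

/- STATEMENT 2: For `K ⊂ ℝ^d` compact and `K`-valued random variables `X, Y`,
the laws agree iff the expected tensor exponentials `E[exp_⊗(X)] = E[exp_⊗(Y)]`
agree.  Componentwise (in the orthonormal word basis of the tensor powers, the
`1/n!` factors being harmless), equality of the expected tensor exponentials is
exactly equality of all mixed moments `E[X^{i_1} ⋯ X^{i_n}]`, which is how we
state the right-hand side. -/
theorem statement2 {Ω : Type*} [MeasurableSpace Ω] {d : ℕ}
    (P : Measure Ω) [IsProbabilityMeasure P]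
    (K : Set (EuclideanSpace ℝ (Fin d))) (hK : IsCompact K)
    (X Y : Ω → EuclideanSpace ℝ (Fin d)) (hXm : Measurable X) (hYm : Measurable Y)
    (hXK : ∀ ω, X ω ∈ K) (hYK : ∀ ω, Y ω ∈ K) :
    Measure.map X P = Measure.map Y P ↔
      ∀ (n : ℕ) (i : Fin n → Fin d),
        (∫ ω, ∏ j, X ω (i j) ∂P) = ∫ ω, ∏ j, Y ω (i j) ∂P := by
  classical
  constructor
  · intro h n i
    have hc : Continuous fun x : EuclideanSpace ℝ (Fin d) => ∏ j, x (i j) := by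
      exact continuous_finset_prod _ fun j _ => (EuclideanSpace.proj (i j)).continuous
    rw [← integral_map hXm.aemeasurable hc.aestronglyMeasurable,
      ← integral_map hYm.aemeasurable hc.aestronglyMeasurable, h]
  · intro h
    haveI : CompactSpace K := isCompact_iff_compactSpace.mp hK
    set X' : Ω → K := fun ω => ⟨X ω, hXK ω⟩ with hX'
    set Y' : Ω → K := fun ω => ⟨Y ω, hYK ω⟩ with hY'
    have hX'm : Measurable X' := hXm.subtype_mk
    have hY'm : Measurable Y' := hYm.subtype_mk
    -- integrability of continuous functions composed with K-valued maps
    have hint : ∀ (Z : Ω → K), Measurable Z → ∀ g : C(K, ℝ),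
        Integrable (fun ω => g (Z ω)) P := by
      intro Z hZ g
      refine ⟨(g.continuous.measurable.comp hZ).aestronglyMeasurable, ?_⟩
      exact HasFiniteIntegral.of_bounded (C := ‖g‖)
        (Filter.Eventually.of_forall fun ω => g.norm_coe_le_norm (Z ω))
    -- the two integration functionals on C(K, ℝ)
    set L1 : C(K, ℝ) → ℝ := fun g => ∫ ω, g (X' ω) ∂P with hL1
    set L2 : C(K, ℝ) → ℝ := fun g => ∫ ω, g (Y' ω) ∂P with hL2
    have hLip : ∀ (Z : Ω → K) (hZ : Measurable Z),
        LipschitzWith 1 (fun g : C(K, ℝ) => ∫ ω, g (Z ω) ∂P) := by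
      intro Z hZ
      refine LipschitzWith.of_dist_le_mul fun g1 g2 => ?_
      rw [NNReal.coe_one, one_mul, Real.dist_eq, ← integral_sub (hint Z hZ g1) (hint Z hZ g2)]
      calc |∫ ω, (g1 (Z ω) - g2 (Z ω)) ∂P| ≤ ∫ ω, |g1 (Z ω) - g2 (Z ω)| ∂P := by
            simpa [Real.norm_eq_abs] using
              norm_integral_le_integral_norm (μ := P) (fun ω => g1 (Z ω) - g2 (Z ω))
        _ ≤ ∫ _ω, dist g1 g2 ∂P := by
            refine integral_mono ((hint Z hZ g1).sub (hint Z hZ g2)).abs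
              (integrable_const _) fun ω => ?_
            rw [← Real.dist_eq]
            exact ContinuousMap.dist_apply_le_dist (Z ω)
        _ = dist g1 g2 := by simp
    -- coordinate functions and the polynomial subalgebra
    set coords : Fin d → C(K, ℝ) := fun k =>
      ⟨fun x => (x : EuclideanSpace ℝ (Fin d)) k, ((EuclideanSpace.proj k).continuous.comp continuous_subtype_val)⟩
      with hcoords
    set A : Subalgebra ℝ C(K, ℝ) := (MvPolynomial.aeval coords).range with hA
    have hsep : A.SeparatesPoints := by
      intro x y hxy
      have : (x : EuclideanSpace ℝ (Fin d)) ≠ (y : EuclideanSpace ℝ (Fin d)) := fun hc => hxy (Subtype.ext hc)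
      obtain ⟨k, hk⟩ : ∃ k, (x : EuclideanSpace ℝ (Fin d)) k ≠ (y : EuclideanSpace ℝ (Fin d)) k := by
        by_contra hc
        push_neg at hc
        exact this (PiLp.ext hc)
      exact ⟨⇑(coords k), ⟨coords k, (AlgHom.mem_range _).mpr ⟨MvPolynomial.X k, MvPolynomial.aeval_X coords k⟩, rfl⟩, hk⟩
    have hdense : Dense (A : Set C(K, ℝ)) := by
      have htop := ContinuousMap.subalgebra_topologicalClosure_eq_top_of_separatesPoints A hsep
      rw [dense_iff_closure_eq]
      rw [← Subalgebra.topologicalClosure_coe, htop]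
      rfl
    -- pointwise evaluation of aeval
    have hpt : ∀ (p : MvPolynomial (Fin d) ℝ) (x : K),
        (MvPolynomial.aeval coords p) x = MvPolynomial.eval (fun k => (x : EuclideanSpace ℝ (Fin d)) k) p := by
      intro p x
      induction p using MvPolynomial.induction_on with
      | C a => simp [MvPolynomial.algebraMap_eq]
      | add p q hp hq => simp [hp, hq]
      | mul_X p k hp => rw [map_mul, ContinuousMap.mul_apply, hp]; simp [hcoords]; exact Or.inl rfl
    -- equality of moments for monomials
    have hmono : ∀ f : Fin d →₀ ℕ,
        (∫ ω, ∏ k, X ω k ^ f k ∂P) = ∫ ω, ∏ k, Y ω k ^ f k ∂P := by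
      intro f
      have hX1 : ∀ ω, (∏ k, X ω k ^ f k) =
          ∏ j : Fin (f.toMultiset.toList.length), X ω (f.toMultiset.toList.get j) :=
        fun ω => monomial_eq_word_prod f (X ω)
      have hY1 : ∀ ω, (∏ k, Y ω k ^ f k) =
          ∏ j : Fin (f.toMultiset.toList.length), Y ω (f.toMultiset.toList.get j) :=
        fun ω => monomial_eq_word_prod f (Y ω)
      simp only [hX1, hY1]
      exact h _ _
    -- equality of the functionals on A
    have hagree : Set.EqOn L1 L2 (A : Set C(K, ℝ)) := by
      intro g hg
      obtain ⟨p, hp⟩ := (AlgHom.mem_range _).mp hg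
      have hcont : ∀ f : Fin d →₀ ℕ,
          Continuous fun x : K => p.coeff f * ∏ k, (x : EuclideanSpace ℝ (Fin d)) k ^ f k :=
        fun f => continuous_const.mul (continuous_finset_prod _ fun k _ =>
          (((EuclideanSpace.proj k).continuous.comp continuous_subtype_val).pow _))
      have hintZ : ∀ (Z : Ω → K), Measurable Z → ∀ f : Fin d →₀ ℕ,
          Integrable (fun ω => p.coeff f * ∏ k, (Z ω : EuclideanSpace ℝ (Fin d)) k ^ f k) P :=
        fun Z hZ f => hint Z hZ ⟨_, hcont f⟩
      have eZ : ∀ (Z : Ω → K), Measurable Z →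
          (∫ ω, (MvPolynomial.aeval coords p) (Z ω) ∂P) =
            ∑ f ∈ p.support, ∫ ω, p.coeff f * ∏ k, (Z ω : EuclideanSpace ℝ (Fin d)) k ^ f k ∂P := by
        intro Z hZ
        rw [← integral_finset_sum _ fun f _ => hintZ Z hZ f]
        refine integral_congr_ae (Filter.Eventually.of_forall fun ω => ?_)
        simp only [hpt, MvPolynomial.eval_eq']
      have : L1 (MvPolynomial.aeval coords p) = L2 (MvPolynomial.aeval coords p) := by
        rw [hL1, hL2]
        simp only []
        rw [eZ X' hX'm, eZ Y' hY'm]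
        refine Finset.sum_congr rfl fun f _ => ?_
        rw [integral_const_mul, integral_const_mul]
        congr 1
        exact hmono f
      rwa [hp] at this
    have hL12 : L1 = L2 :=
      Continuous.ext_on hdense (hLip X' hX'm).continuous (hLip Y' hY'm).continuous hagree
    -- conclude equality of the pushforward measures
    have key : ∀ g : EuclideanSpace ℝ (Fin d) → ℝ, Continuous g →
        (∫ ω, g (X ω) ∂P) = ∫ ω, g (Y ω) ∂P := by
      intro g hg
      have hgK : Continuous fun x : K => g (x : EuclideanSpace ℝ (Fin d)) := hg.comp continuous_subtype_val
      have := congrFun hL12 ⟨fun x => g (x : EuclideanSpace ℝ (Fin d)), hgK⟩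
      simpa [hL1, hL2] using this
    haveI : IsProbabilityMeasure (Measure.map X P) := Measure.isProbabilityMeasure_map hXm.aemeasurable
    haveI : IsProbabilityMeasure (Measure.map Y P) := Measure.isProbabilityMeasure_map hYm.aemeasurable
    apply ext_of_forall_lintegral_eq_of_IsFiniteMeasure
    intro f
    have hfX : (∫⁻ x, f x ∂(Measure.map X P)) ≠ ⊤ :=
      (BoundedContinuousFunction.lintegral_lt_top_of_nnreal _ f).ne
    have hfY : (∫⁻ x, f x ∂(Measure.map Y P)) ≠ ⊤ :=
      (BoundedContinuousFunction.lintegral_lt_top_of_nnreal _ f).ne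
    rw [← ENNReal.toReal_eq_toReal_iff' hfX hfY,
      BoundedContinuousFunction.toReal_lintegral_coe_eq_integral,
      BoundedContinuousFunction.toReal_lintegral_coe_eq_integral]
    have hgc : Continuous fun x : EuclideanSpace ℝ (Fin d) => (f x : ℝ) := NNReal.continuous_coe.comp f.continuous
    rw [integral_map hXm.aemeasurable hgc.aestronglyMeasurable,
      integral_map hYm.aemeasurable hgc.aestronglyMeasurable]
    exact key _ hgc
end

section
/- Let Z be a compact metric space, H a separable Hilbert space, and ρ: Z → H a continuous injective map. Let f: ℝ → ℝ be real analytic with strictly positive Taylor coefficients at 0 and globally convergent Taylor series. Then the reproducing kernel Hilbert space of the kernel k(z, z') := f(⟨ρ(z), ρ(z')⟩_H) is dense in C(Z, ℝ) with the uniform norm. -/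
open scoped RealInnerProductSpace
open Finset

namespace CS7

lemma abs_prod_le (n : ℕ) (u : Fin n → ℝ) (M : ℝ) (hu : ∀ j, |u j| ≤ M) :
    |∏ j, u j| ≤ M ^ n := by
  calc |∏ j, u j| = ∏ j, |u j| := by rw [Finset.abs_prod]
    _ ≤ ∏ _j : Fin n, M := Finset.prod_le_prod (fun _ _ => abs_nonneg _) (fun j _ => hu j)
    _ = M ^ n := by simp

lemma prodDiffBound (n : ℕ) (u v : Fin n → ℝ) (M δ : ℝ) (hM : 0 ≤ M) (hδ : 0 ≤ δ)
    (hu : ∀ j, |u j| ≤ M) (hv : ∀ j, |v j| ≤ M) (huv : ∀ j, |u j - v j| ≤ δ) :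
    |∏ j, u j - ∏ j, v j| ≤ n * M ^ (n - 1) * δ := by
  induction n with
  | zero => simp
  | succ m ih =>
    rw [Fin.prod_univ_succ, Fin.prod_univ_succ]
    have key : |u 0 * ∏ j : Fin m, u j.succ - v 0 * ∏ j : Fin m, v j.succ|
        ≤ |u 0 - v 0| * |∏ j : Fin m, u j.succ|
          + |v 0| * |∏ j : Fin m, u j.succ - ∏ j : Fin m, v j.succ| := by
      have : u 0 * ∏ j : Fin m, u j.succ - v 0 * ∏ j : Fin m, v j.succ
          = (u 0 - v 0) * ∏ j : Fin m, u j.succ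
            + v 0 * (∏ j : Fin m, u j.succ - ∏ j : Fin m, v j.succ) := by ring
      rw [this]
      exact (abs_add_le _ _).trans (by rw [abs_mul, abs_mul])
    have h1 : |∏ j : Fin m, u j.succ| ≤ M ^ m := CS7.abs_prod_le m _ M (fun j => hu j.succ)
    have h2 : |∏ j : Fin m, u j.succ - ∏ j : Fin m, v j.succ| ≤ m * M ^ (m - 1) * δ :=
      ih (fun j => u j.succ) (fun j => v j.succ) (fun j => hu j.succ) (fun j => hv j.succ)
        (fun j => huv j.succ)
    have h3 : |v 0| * |∏ j : Fin m, u j.succ - ∏ j : Fin m, v j.succ| ≤ m * M ^ m * δ := by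
      rcases Nat.eq_zero_or_pos m with hm | hm
      · subst hm; simp
      · have heq : M * (m * M ^ (m - 1) * δ) = m * M ^ m * δ := by
          rw [show M * (m * M ^ (m-1) * δ) = m * (M * M ^ (m-1)) * δ by ring, ← pow_succ']
          congr 3
          omega
        calc |v 0| * |∏ j : Fin m, u j.succ - ∏ j : Fin m, v j.succ|
            ≤ M * (m * M ^ (m - 1) * δ) := by
              apply mul_le_mul (hv 0) h2 (abs_nonneg _) hM
          _ = m * M ^ m * δ := heq
    calc |u 0 * ∏ j : Fin m, u j.succ - v 0 * ∏ j : Fin m, v j.succ|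
        ≤ |u 0 - v 0| * |∏ j : Fin m, u j.succ|
          + |v 0| * |∏ j : Fin m, u j.succ - ∏ j : Fin m, v j.succ| := key
      _ ≤ δ * M ^ m + m * M ^ m * δ :=
          add_le_add (mul_le_mul (huv 0) h1 (abs_nonneg _) hδ) h3
      _ = (m + 1 : ℕ) * M ^ ((m + 1) - 1) * δ := by push_cast; ring_nf

lemma mem_closure_of_functionals {E : Type*} [NormedAddCommGroup E] [NormedSpace ℝ E]
    (p : Submodule ℝ E) (x : E)
    (h : ∀ L : E →L[ℝ] ℝ, (∀ y ∈ p, L y = 0) → L x = 0) :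
    x ∈ closure (p : Set E) := by
  by_contra hx
  obtain ⟨f, u, hfs, hux⟩ := geometric_hahn_banach_closed_point
    (p.convex.closure) isClosed_closure hx
  have hu0 : 0 < u := by
    have := hfs 0 (subset_closure p.zero_mem)
    simpa using this
  have hvan : ∀ y ∈ p, f y = 0 := by
    intro y hy
    by_contra hy0
    have h2 : f ((2 * u / f y) • y) < u :=
      hfs _ (subset_closure (p.smul_mem _ hy))
    rw [map_smul, smul_eq_mul] at h2
    rw [div_mul_cancel₀] at h2
    · linarith
    · exact hy0
  have := h f hvan
  rw [this] at hux
  linarith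

section proj
variable {H : Type*} [NormedAddCommGroup H] [InnerProductSpace ℝ H]
  {ι : Type*} {v : ι → H}

lemma inner_proj_sum (hv : Orthonormal ℝ v) (x : H) (T : Finset ι) :
    ⟪x, ∑ i ∈ T, ⟪v i, x⟫ • v i⟫ = ∑ i ∈ T, ⟪v i, x⟫ ^ 2 := by
  rw [inner_sum]
  refine Finset.sum_congr rfl fun i _ => ?_
  rw [real_inner_smul_right, real_inner_comm, sq]

lemma norm_proj_sq (hv : Orthonormal ℝ v) (x : H) (T : Finset ι) :
    ‖∑ i ∈ T, ⟪v i, x⟫ • v i‖ ^ 2 = ∑ i ∈ T, ⟪v i, x⟫ ^ 2 := by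
  rw [← real_inner_self_eq_norm_sq, inner_sum]
  refine Finset.sum_congr rfl fun i hi => ?_
  rw [real_inner_smul_right, hv.inner_left_sum _ hi]
  simp [sq]

lemma norm_sub_proj_sq (hv : Orthonormal ℝ v) (x : H) (T : Finset ι) :
    ‖x - ∑ i ∈ T, ⟪v i, x⟫ • v i‖ ^ 2 = ‖x‖ ^ 2 - ∑ i ∈ T, ⟪v i, x⟫ ^ 2 := by
  rw [norm_sub_sq_real, CS7.inner_proj_sum hv, CS7.norm_proj_sq hv]
  ring

lemma sum_inner_sq_le (hv : Orthonormal ℝ v) (x : H) (T : Finset ι) :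
    ∑ i ∈ T, ⟪v i, x⟫ ^ 2 ≤ ‖x‖ ^ 2 := by
  have := hv.sum_inner_products_le x (s := T)
  simpa [Real.norm_eq_abs, sq_abs] using this

lemma norm_proj_le (hv : Orthonormal ℝ v) (x : H) (T : Finset ι) :
    ‖∑ i ∈ T, ⟪v i, x⟫ • v i‖ ≤ ‖x‖ := by
  have h1 := CS7.norm_proj_sq hv x T
  have h2 := CS7.sum_inner_sq_le hv x T
  nlinarith [norm_nonneg (∑ i ∈ T, ⟪v i, x⟫ • v i), norm_nonneg x]

end proj

lemma uniform_tail {Z : Type*} [TopologicalSpace Z] [CompactSpace Z]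
    {H : Type*} [NormedAddCommGroup H] [InnerProductSpace ℝ H]
    {ι : Type*} (b : HilbertBasis ι ℝ H) (ρ : Z → H) (hρ : Continuous ρ)
    {δ : ℝ} (hδ : 0 < δ) :
    ∃ S : Finset ι, ∀ T : Finset ι, S ⊆ T → ∀ w,
      ‖ρ w - ∑ i ∈ T, ⟪b i, ρ w⟫ • b i‖ ≤ δ := by
  classical
  have hv : Orthonormal ℝ b := b.orthonormal
  have hpar : ∀ w : Z, ∃ S : Finset ι,
      ‖ρ w‖ ^ 2 - ∑ i ∈ S, ⟪b i, ρ w⟫ ^ 2 < δ ^ 2 := by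
    intro w
    have hs : HasSum (fun i => ⟪b i, ρ w⟫ ^ 2) (‖ρ w‖ ^ 2) := by
      have := b.hasSum_inner_mul_inner (ρ w) (ρ w)
      rw [real_inner_self_eq_norm_sq] at this
      convert this using 2 with i
      · rfl
      rw [sq, real_inner_comm]
    have h2 : ∀ᶠ S : Finset ι in Filter.atTop,
        ‖ρ w‖ ^ 2 - ∑ i ∈ S, ⟪b i, ρ w⟫ ^ 2 < δ ^ 2 := by
      have h3 := hs
      rw [HasSum] at h3
      have h4 : ∀ᶠ s : Finset ι in Filter.atTop,
          ∑ i ∈ s, ⟪b i, ρ w⟫ ^ 2 ∈ Set.Ioi (‖ρ w‖ ^ 2 - δ ^ 2) :=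
        h3 (Ioi_mem_nhds (by nlinarith))
      filter_upwards [h4] with s hs2
      simp only [Set.mem_Ioi] at hs2
      linarith
    exact h2.exists
  have hcont : ∀ S : Finset ι, Continuous fun w =>
      ‖ρ w‖ ^ 2 - ∑ i ∈ S, ⟪b i, ρ w⟫ ^ 2 := by
    intro S
    apply Continuous.sub
    · exact (hρ.norm).pow 2
    · exact continuous_finset_sum _ fun i _ => (Continuous.inner continuous_const hρ).pow 2
  choose Sw hSw using hpar
  have hcov : (Set.univ : Set Z) ⊆ ⋃ w : Z,
      {w' | ‖ρ w'‖ ^ 2 - ∑ i ∈ Sw w, ⟪b i, ρ w'⟫ ^ 2 < δ ^ 2} := by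
    intro w _
    exact Set.mem_iUnion.2 ⟨w, hSw w⟩
  obtain ⟨t, ht⟩ := isCompact_univ.elim_finite_subcover
    (fun w : Z => {w' | ‖ρ w'‖ ^ 2 - ∑ i ∈ Sw w, ⟪b i, ρ w'⟫ ^ 2 < δ ^ 2})
    (fun w => isOpen_lt (hcont (Sw w)) continuous_const) hcov
  refine ⟨t.sup Sw, fun T hT w => ?_⟩
  obtain ⟨w0, hw0t, hw0⟩ := Set.mem_iUnion₂.1 (ht (Set.mem_univ w))
  simp only [Set.mem_setOf_eq] at hw0
  have hsub : Sw w0 ⊆ T := (Finset.le_sup hw0t).trans hT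
  have hmono : ∑ i ∈ Sw w0, ⟪b i, ρ w⟫ ^ 2 ≤ ∑ i ∈ T, ⟪b i, ρ w⟫ ^ 2 :=
    Finset.sum_le_sum_of_subset_of_nonneg hsub (fun i _ _ => sq_nonneg _)
  have hkey : ‖ρ w - ∑ i ∈ T, ⟪b i, ρ w⟫ • b i‖ ^ 2 < δ ^ 2 := by
    rw [CS7.norm_sub_proj_sq hv]
    linarith
  nlinarith [norm_nonneg (ρ w - ∑ i ∈ T, ⟪b i, ρ w⟫ • b i)]

section main
variable {Z : Type*} [TopologicalSpace Z] [CompactSpace Z]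
variable {H : Type*} [NormedAddCommGroup H] [InnerProductSpace ℝ H]
variable {ι : Type*}

noncomputable def P (ρ : Z → H) (hρc : Continuous ρ) (n : ℕ) (x : Fin n → H) : C(Z, ℝ) :=
  ⟨fun w => ∏ j, ⟪x j, ρ w⟫,
    continuous_finset_prod _ fun _ _ => Continuous.inner continuous_const hρc⟩

@[simp] lemma P_apply (ρ : Z → H) (hρc : Continuous ρ) (n : ℕ) (x : Fin n → H) (w : Z) :
    P ρ hρc n x w = ∏ j, ⟪x j, ρ w⟫ := rfl

noncomputable def pr (v : ι → H) (S : Finset ι) (x : H) : H := ∑ i ∈ S, ⟪v i, x⟫ • v i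

lemma pr_continuous (v : ι → H) (S : Finset ι) (ρ : Z → H) (hρc : Continuous ρ) :
    Continuous fun w => pr v S (ρ w) :=
  continuous_finset_sum _ fun _ _ => (Continuous.inner continuous_const hρc).smul continuous_const

noncomputable def cc (ρ : Z → H) (hρc : Continuous ρ) (v : ι → H) (L : C(Z, ℝ) →L[ℝ] ℝ)
    (n : ℕ) (p : Fin n → ι) : ℝ := L (P ρ hρc n fun j => v (p j))

lemma inner_pr (v : ι → H) (S : Finset ι) (x y : H) :
    ⟪x, pr v S y⟫ = ∑ i ∈ S, ⟪v i, y⟫ * ⟪x, v i⟫ := by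
  rw [pr, inner_sum]
  exact Finset.sum_congr rfl fun i _ => real_inner_smul_right _ _ _

lemma pr_inner_basis {v : ι → H} (hv : Orthonormal ℝ v) (S : Finset ι) (y : H) {i : ι}
    (hi : i ∈ S) : ⟪pr v S y, v i⟫ = ⟪v i, y⟫ := by
  rw [pr]
  simpa using hv.inner_left_sum (fun i => ⟪v i, y⟫) hi

lemma PS_eq (ρ : Z → H) (hρc : Continuous ρ) (v : ι → H) (S : Finset ι) (n : ℕ)
    (x : Fin n → H) :
    P (fun w => pr v S (ρ w)) (pr_continuous v S ρ hρc) n x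
      = ∑ p ∈ Fintype.piFinset (fun _ : Fin n => S),
          (∏ j, ⟪x j, v (p j)⟫) • P ρ hρc n (fun j => v (p j)) := by
  ext w
  simp only [ContinuousMap.coe_sum, Finset.sum_apply, ContinuousMap.coe_smul, Pi.smul_apply,
    P_apply, smul_eq_mul]
  calc ∏ j, ⟪x j, pr v S (ρ w)⟫
      = ∏ j, ∑ i ∈ S, ⟪v i, ρ w⟫ * ⟪x j, v i⟫ :=
        Finset.prod_congr rfl fun j _ => inner_pr v S (x j) (ρ w)
    _ = ∑ p ∈ Fintype.piFinset (fun _ : Fin n => S), ∏ j, (⟪v (p j), ρ w⟫ * ⟪x j, v (p j)⟫) :=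
        Finset.prod_univ_sum _ _
    _ = ∑ p ∈ Fintype.piFinset (fun _ : Fin n => S),
          (∏ j, ⟪x j, v (p j)⟫) * ∏ j, ⟪v (p j), ρ w⟫ := by
        refine Finset.sum_congr rfl fun p _ => ?_
        rw [Finset.prod_mul_distrib]
        ring

lemma L_PS (ρ : Z → H) (hρc : Continuous ρ) (v : ι → H) (S : Finset ι)
    (L : C(Z, ℝ) →L[ℝ] ℝ) (n : ℕ) (x : Fin n → H) :
    L (P (fun w => pr v S (ρ w)) (pr_continuous v S ρ hρc) n x)
      = ∑ p ∈ Fintype.piFinset (fun _ : Fin n => S),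
          (∏ j, ⟪x j, v (p j)⟫) * cc ρ hρc v L n p := by
  rw [PS_eq, map_sum]
  exact Finset.sum_congr rfl fun p _ => by rw [map_smul, smul_eq_mul]; rfl

lemma L_Q {v : ι → H} (hv : Orthonormal ℝ v) (ρ : Z → H) (hρc : Continuous ρ) (S : Finset ι)
    (L : C(Z, ℝ) →L[ℝ] ℝ) (n : ℕ) (z : Z) :
    L (P (fun w => pr v S (ρ w)) (pr_continuous v S ρ hρc) n (fun _ => pr v S (ρ z)))
      = ∑ p ∈ Fintype.piFinset (fun _ : Fin n => S),
          (∏ j, ⟪v (p j), ρ z⟫) * cc ρ hρc v L n p := by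
  rw [L_PS ρ hρc]
  refine Finset.sum_congr rfl fun p hp => ?_
  congr 1
  refine Finset.prod_congr rfl fun j _ => ?_
  exact pr_inner_basis hv S (ρ z) ((Fintype.mem_piFinset.1 hp) j)

noncomputable def FF (ρ : Z → H) (hρc : Continuous ρ) (L : C(Z, ℝ) →L[ℝ] ℝ) (n : ℕ) :
    C(Z, ℝ) :=
  (⟨⇑L, L.continuous⟩ : C(C(Z, ℝ), ℝ)).comp
    (ContinuousMap.curry ⟨fun q : Z × Z => ⟪ρ q.1, ρ q.2⟫ ^ n,
      (Continuous.inner (hρc.comp continuous_fst) (hρc.comp continuous_snd)).pow n⟩)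

lemma FF_apply (ρ : Z → H) (hρc : Continuous ρ) (L : C(Z, ℝ) →L[ℝ] ℝ) (n : ℕ) (z : Z) :
    FF ρ hρc L n z = L (P ρ hρc n fun _ => ρ z) := by
  show L _ = L _
  congr 1
  ext w
  simp [ContinuousMap.curry_apply, Finset.prod_const]

lemma approx (ρ : Z → H) (hρc : Continuous ρ) {v : ι → H} (hv : Orthonormal ℝ v)
    (R : ℝ) (hR0 : 0 ≤ R) (hR : ∀ w, ‖ρ w‖ ≤ R) (L : C(Z, ℝ) →L[ℝ] ℝ)
    (n : ℕ) (S : Finset ι) (δ : ℝ) (hδ : 0 ≤ δ)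
    (htail : ∀ w, ‖ρ w - pr v S (ρ w)‖ ≤ δ) :
    |L (FF ρ hρc L n) - ∑ p ∈ Fintype.piFinset (fun _ : Fin n => S), (cc ρ hρc v L n p) ^ 2|
      ≤ ‖L‖ ^ 2 * (n * (R ^ 2) ^ (n - 1) * (2 * R * δ)) := by
  classical
  set FS : C(Z, ℝ) := ∑ p ∈ Fintype.piFinset (fun _ : Fin n => S),
      (cc ρ hρc v L n p) • P ρ hρc n (fun j => v (p j)) with hFSdef
  have hLFS : L FS = ∑ p ∈ Fintype.piFinset (fun _ : Fin n => S), (cc ρ hρc v L n p) ^ 2 := by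
    rw [hFSdef, map_sum]
    refine Finset.sum_congr rfl fun p _ => ?_
    rw [map_smul, smul_eq_mul, sq]
    rfl
  have hpt : ∀ z w : Z, |⟪ρ z, ρ w⟫ ^ n - ⟪pr v S (ρ z), pr v S (ρ w)⟫ ^ n|
      ≤ n * (R ^ 2) ^ (n - 1) * (2 * R * δ) := by
    intro z w
    have h1 : |⟪ρ z, ρ w⟫| ≤ R ^ 2 := by
      refine (abs_real_inner_le_norm _ _).trans ?_
      calc ‖ρ z‖ * ‖ρ w‖ ≤ R * R := mul_le_mul (hR z) (hR w) (norm_nonneg _) hR0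
        _ = R ^ 2 := (sq R).symm
    have hprz : ‖pr v S (ρ z)‖ ≤ R := (norm_proj_le hv (ρ z) S).trans (hR z)
    have hprw : ‖pr v S (ρ w)‖ ≤ R := (norm_proj_le hv (ρ w) S).trans (hR w)
    have h2 : |⟪pr v S (ρ z), pr v S (ρ w)⟫| ≤ R ^ 2 := by
      refine (abs_real_inner_le_norm _ _).trans ?_
      calc ‖pr v S (ρ z)‖ * ‖pr v S (ρ w)‖ ≤ R * R :=
            mul_le_mul hprz hprw (norm_nonneg _) hR0
        _ = R ^ 2 := (sq R).symm
    have h3 : |⟪ρ z, ρ w⟫ - ⟪pr v S (ρ z), pr v S (ρ w)⟫| ≤ 2 * R * δ := by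
      have e : ⟪ρ z, ρ w⟫ - ⟪pr v S (ρ z), pr v S (ρ w)⟫
          = ⟪ρ z - pr v S (ρ z), ρ w⟫ + ⟪pr v S (ρ z), ρ w - pr v S (ρ w)⟫ := by
        rw [inner_sub_left, inner_sub_right]
        ring
      rw [e]
      refine (abs_add_le _ _).trans ?_
      have b1 : |⟪ρ z - pr v S (ρ z), ρ w⟫| ≤ δ * R :=
        (abs_real_inner_le_norm _ _).trans (mul_le_mul (htail z) (hR w) (norm_nonneg _) hδ)
      have b2 : |⟪pr v S (ρ z), ρ w - pr v S (ρ w)⟫| ≤ R * δ :=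
        (abs_real_inner_le_norm _ _).trans (mul_le_mul hprz (htail w) (norm_nonneg _) hR0)
      linarith
    have := prodDiffBound n (fun _ => ⟪ρ z, ρ w⟫) (fun _ => ⟪pr v S (ρ z), pr v S (ρ w)⟫)
      (R ^ 2) (2 * R * δ) (by positivity) (by positivity) (fun _ => h1) (fun _ => h2)
      (fun _ => h3)
    simpa [Finset.prod_const] using this
  have hFSz : ∀ z, FS z = L (P (fun w => pr v S (ρ w)) (pr_continuous v S ρ hρc) n
      (fun _ => pr v S (ρ z))) := by
    intro z
    rw [L_Q hv ρ hρc S L n z, hFSdef]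
    simp only [ContinuousMap.coe_sum, Finset.sum_apply, ContinuousMap.coe_smul, Pi.smul_apply,
      P_apply, smul_eq_mul]
    exact Finset.sum_congr rfl fun p _ => mul_comm _ _
  have hdiff : ‖FF ρ hρc L n - FS‖ ≤ ‖L‖ * (n * (R ^ 2) ^ (n - 1) * (2 * R * δ)) := by
    rw [ContinuousMap.norm_le _ (by positivity)]
    intro z
    rw [ContinuousMap.sub_apply, FF_apply, hFSz z, ← map_sub]
    refine (L.le_opNorm _).trans ?_
    refine mul_le_mul_of_nonneg_left ?_ (norm_nonneg L)
    rw [ContinuousMap.norm_le _ (by positivity)]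
    intro w
    rw [ContinuousMap.sub_apply, P_apply, P_apply, Real.norm_eq_abs]
    simpa [Finset.prod_const] using hpt z w
  calc |L (FF ρ hρc L n) - ∑ p ∈ Fintype.piFinset (fun _ : Fin n => S),
        (cc ρ hρc v L n p) ^ 2|
      = |L (FF ρ hρc L n - FS)| := by rw [map_sub, hLFS]
    _ ≤ ‖L‖ * ‖FF ρ hρc L n - FS‖ := by
        have := L.le_opNorm (FF ρ hρc L n - FS)
        simpa [Real.norm_eq_abs] using this
    _ ≤ ‖L‖ * (‖L‖ * (n * (R ^ 2) ^ (n - 1) * (2 * R * δ))) :=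
        mul_le_mul_of_nonneg_left hdiff (norm_nonneg L)
    _ = ‖L‖ ^ 2 * (n * (R ^ 2) ^ (n - 1) * (2 * R * δ)) := by ring

lemma le_zero_of_forall_le_eps {x : ℝ} (h : ∀ ε : ℝ, 0 < ε → x ≤ ε) : x ≤ 0 := by
  by_contra h0
  push_neg at h0
  have := h (x / 2) (by linarith)
  linarith

lemma L_P_zero (ρ : Z → H) (hρc : Continuous ρ) {v : ι → H} (hv : Orthonormal ℝ v)
    (R : ℝ) (hR0 : 0 ≤ R) (hR : ∀ w, ‖ρ w‖ ≤ R) (L : C(Z, ℝ) →L[ℝ] ℝ)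
    (htail : ∀ δ : ℝ, 0 < δ → ∃ S : Finset ι, ∀ w, ‖ρ w - pr v S (ρ w)‖ ≤ δ)
    (hc0 : ∀ (n : ℕ) (p : Fin n → ι), cc ρ hρc v L n p = 0)
    (n : ℕ) (x : Fin n → H) : L (P ρ hρc n x) = 0 := by
  classical
  set B : ℝ := 1 + ∑ j, ‖x j‖ with hB
  have hsum0 : 0 ≤ ∑ j, ‖x j‖ := Finset.sum_nonneg fun j _ => norm_nonneg _
  have hB1 : (1 : ℝ) ≤ B := by rw [hB]; linarith
  have hB0 : 0 ≤ B := by linarith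
  have hxB : ∀ j, ‖x j‖ ≤ B := by
    intro j
    have : ‖x j‖ ≤ ∑ j, ‖x j‖ :=
      Finset.single_le_sum (f := fun j => ‖x j‖) (fun j _ => norm_nonneg _) (Finset.mem_univ j)
    rw [hB]; linarith
  have key : ∀ δ : ℝ, 0 < δ →
      |L (P ρ hρc n x)| ≤ ‖L‖ * (n * (B * R) ^ (n - 1) * (B * δ)) := by
    intro δ hδ
    obtain ⟨S, hS⟩ := htail δ hδ
    have hLS : L (P (fun w => pr v S (ρ w)) (pr_continuous v S ρ hρc) n x) = 0 := by
      rw [L_PS ρ hρc]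
      exact Finset.sum_eq_zero fun p _ => by rw [hc0 n p, mul_zero]
    have hdiff : ‖P ρ hρc n x - P (fun w => pr v S (ρ w)) (pr_continuous v S ρ hρc) n x‖
        ≤ n * (B * R) ^ (n - 1) * (B * δ) := by
      rw [ContinuousMap.norm_le _ (by positivity)]
      intro w
      rw [ContinuousMap.sub_apply, P_apply, P_apply, Real.norm_eq_abs]
      refine prodDiffBound n _ _ (B * R) (B * δ) (by positivity) (by positivity) ?_ ?_ ?_
      · intro j
        exact (abs_real_inner_le_norm _ _).trans
          (mul_le_mul (hxB j) (hR w) (norm_nonneg _) hB0)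
      · intro j
        exact (abs_real_inner_le_norm _ _).trans
          (mul_le_mul (hxB j) ((norm_proj_le hv (ρ w) S).trans (hR w)) (norm_nonneg _) hB0)
      · intro j
        have e : ⟪x j, ρ w⟫ - ⟪x j, pr v S (ρ w)⟫ = ⟪x j, ρ w - pr v S (ρ w)⟫ := by
          rw [inner_sub_right]
        rw [e]
        exact (abs_real_inner_le_norm _ _).trans
          (mul_le_mul (hxB j) (hS w) (norm_nonneg _) hB0)
    calc |L (P ρ hρc n x)|
        = |L (P ρ hρc n x - P (fun w => pr v S (ρ w)) (pr_continuous v S ρ hρc) n x)| := by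
          rw [map_sub, hLS, sub_zero]
      _ ≤ ‖L‖ * ‖P ρ hρc n x - P (fun w => pr v S (ρ w)) (pr_continuous v S ρ hρc) n x‖ := by
          simpa [Real.norm_eq_abs] using
            L.le_opNorm (P ρ hρc n x - P (fun w => pr v S (ρ w)) (pr_continuous v S ρ hρc) n x)
      _ ≤ ‖L‖ * (n * (B * R) ^ (n - 1) * (B * δ)) :=
          mul_le_mul_of_nonneg_left hdiff (norm_nonneg L)
  have habs : |L (P ρ hρc n x)| ≤ 0 := by
    apply le_zero_of_forall_le_eps
    intro ε hε
    set C : ℝ := ‖L‖ * (n * (B * R) ^ (n - 1) * B) with hC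
    have hC0 : 0 ≤ C := by rw [hC]; positivity
    have hδpos : 0 < ε / (C + 1) := by positivity
    refine (key _ hδpos).trans ?_
    have heq : ‖L‖ * (n * (B * R) ^ (n - 1) * (B * (ε / (C + 1)))) = C * (ε / (C + 1)) := by
      rw [hC]; ring
    rw [heq]
    rw [div_eq_mul_inv, ← mul_assoc]
    calc C * ε * (C + 1)⁻¹ ≤ (C + 1) * ε * (C + 1)⁻¹ := by
          have : C * ε ≤ (C + 1) * ε := by nlinarith
          exact mul_le_mul_of_nonneg_right this (by positivity)
      _ = ε := by field_simp
  exact abs_eq_zero.1 (le_antisymm habs (abs_nonneg _))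

lemma L_zero (ρ : Z → H) (hρc : Continuous ρ) (hρi : Function.Injective ρ)
    (L : C(Z, ℝ) →L[ℝ] ℝ)
    (hmono : ∀ (n : ℕ) (x : Fin n → H), L (P ρ hρc n x) = 0) :
    ∀ y : C(Z, ℝ), L y = 0 := by
  classical
  set A : Subalgebra ℝ C(Z, ℝ) :=
    Algebra.adjoin ℝ (Set.range fun x : H => P ρ hρc 1 (fun _ => x)) with hA
  have hsep : A.SeparatesPoints := by
    intro w w' hww'
    have hd : ρ w - ρ w' ≠ 0 := sub_ne_zero_of_ne fun h => hww' (hρi h)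
    refine ⟨_, ⟨P ρ hρc 1 (fun _ => ρ w - ρ w'),
      Algebra.subset_adjoin ⟨ρ w - ρ w', rfl⟩, rfl⟩, ?_⟩
    simp only [P_apply, Fin.prod_univ_one]
    intro heq
    apply hd
    have h2 : ⟪ρ w - ρ w', ρ w - ρ w'⟫ = 0 := by
      rw [inner_sub_right]
      rw [heq]  -- ?
      ring
    exact inner_self_eq_zero.1 h2
  have hgen : ∀ y ∈ Submonoid.closure (Set.range fun x : H => P ρ hρc 1 (fun _ => x)),
      ∃ (m : ℕ) (xs : Fin m → H), y = P ρ hρc m xs := by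
    intro y hy
    induction hy using Submonoid.closure_induction with
    | mem y hy => obtain ⟨x, hx⟩ := hy; exact ⟨1, fun _ => x, hx.symm⟩
    | one =>
      refine ⟨0, Fin.elim0, ?_⟩
      ext w
      simp
    | mul y1 y2 hy1 hy2 ih1 ih2 =>
      obtain ⟨m1, xs1, rfl⟩ := ih1
      obtain ⟨m2, xs2, rfl⟩ := ih2
      refine ⟨m1 + m2, Fin.append xs1 xs2, ?_⟩
      ext w
      simp [Fin.prod_univ_add, Fin.append_left, Fin.append_right]
  have hvA : ∀ y ∈ A, L y = 0 := by
    intro y hy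
    have hy' : y ∈ Submodule.span ℝ
        ((Submonoid.closure (Set.range fun x : H => P ρ hρc 1 (fun _ => x))) : Set C(Z, ℝ)) := by
      have h2 : y ∈ Subalgebra.toSubmodule A := hy
      rw [hA, Algebra.adjoin_eq_span] at h2
      exact h2
    refine Submodule.span_induction ?_ ?_ ?_ ?_ hy'
    · intro y hy
      obtain ⟨m, xs, rfl⟩ := hgen y hy
      exact hmono m xs
    · exact map_zero L
    · intro y z _ _ hy hz
      rw [map_add, hy, hz, add_zero]
    · intro r y _ hy
      rw [map_smul, hy, smul_zero]
  have htop : A.topologicalClosure = ⊤ :=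
    ContinuousMap.subalgebra_topologicalClosure_eq_top_of_separatesPoints A hsep
  have hdense : Dense (A : Set C(Z, ℝ)) := by
    rw [dense_iff_closure_eq]
    have h2 := congrArg (fun B : Subalgebra ℝ C(Z, ℝ) => (B : Set C(Z, ℝ))) htop
    rw [← Subalgebra.topologicalClosure_coe]
    simpa using h2
  have hfun : ⇑L = fun _ : C(Z, ℝ) => (0 : ℝ) :=
    Continuous.ext_on hdense L.continuous continuous_const fun y hy => hvA y hy
  intro y
  exact congrFun hfun y

end main
end CS7

/- STATEMENT 7 (Christmann–Steinwart universality): for `Z` a compact metric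
space, `H` a separable Hilbert space, `ρ : Z → H` continuous and injective, and
`f(t) = ∑ a_n tⁿ` real analytic with strictly positive coefficients and a
globally convergent Taylor series, the RKHS of `k(z,z') = f(⟨ρ z, ρ z'⟩)` is
dense in `C(Z, ℝ)` for the uniform norm.  Density of the RKHS is expressed as
uniform approximability of every continuous function by finite linear
combinations of kernel sections `k(zᵢ, ·)`. -/
set_option maxHeartbeats 2000000 in
theorem statement7 {Z H : Type*} [MetricSpace Z] [CompactSpace Z]
    [NormedAddCommGroup H] [InnerProductSpace ℝ H] [CompleteSpace H]
    [TopologicalSpace.SeparableSpace H]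
    (ρ : Z → H) (hρc : Continuous ρ) (hρi : Function.Injective ρ)
    (f : ℝ → ℝ) (a : ℕ → ℝ) (ha : ∀ n, 0 < a n)
    (hf : ∀ t : ℝ, HasSum (fun n => a n * t ^ n) (f t)) :
    ∀ g : Z → ℝ, Continuous g → ∀ ε > 0,
      ∃ (n : ℕ) (c : Fin n → ℝ) (z : Fin n → Z),
        ∀ w : Z, |g w - ∑ i, c i * f ((inner ℝ (ρ (z i)) (ρ w) : ℝ))| ≤ ε := by
  classical
  intro g hg ε hε
  rcases isEmpty_or_nonempty Z with hZ | hZ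
  · exact ⟨0, Fin.elim0, Fin.elim0, fun w => (IsEmpty.false w).elim⟩
  -- a uniform bound on ‖ρ‖
  obtain ⟨R0, hR0'⟩ := (isCompact_range hρc).isBounded.subset_closedBall 0
  set R : ℝ := max R0 0 with hRdef
  have hR0 : 0 ≤ R := le_max_right _ _
  have hR : ∀ w, ‖ρ w‖ ≤ R := by
    intro w
    have := hR0' (Set.mem_range_self w)
    rw [Metric.mem_closedBall, dist_zero_right] at this
    exact this.trans (le_max_left _ _)
  -- the kernel powers as continuous maps
  set G : ℕ → C(Z, C(Z, ℝ)) := fun n =>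
    ContinuousMap.curry ⟨fun q : Z × Z => ⟪ρ q.1, ρ q.2⟫ ^ n,
      (Continuous.inner (hρc.comp continuous_fst) (hρc.comp continuous_snd)).pow n⟩ with hGdef
  have hGapply : ∀ n z w, G n z w = ⟪ρ z, ρ w⟫ ^ n := fun n z w => rfl
  have hGP : ∀ n z, G n z = CS7.P ρ hρc n (fun _ => ρ z) := by
    intro n z
    ext w
    rw [hGapply, CS7.P_apply]
    simp [Finset.prod_const]
  have hGnorm : ∀ n z, ‖G n z‖ ≤ (R ^ 2) ^ n := by
    intro n z
    rw [ContinuousMap.norm_le _ (by positivity)]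
    intro w
    rw [hGapply, Real.norm_eq_abs, abs_pow]
    refine pow_le_pow_left₀ (abs_nonneg _) ?_ n
    refine (abs_real_inner_le_norm _ _).trans ?_
    calc ‖ρ z‖ * ‖ρ w‖ ≤ R * R := mul_le_mul (hR z) (hR w) (norm_nonneg _) hR0
      _ = R ^ 2 := (sq R).symm
  have hsummR : Summable fun n => a n * (R ^ 2) ^ n := (hf (R ^ 2)).summable
  -- kernel sections
  have hKsum : ∀ z, Summable fun n => a n • G n z := by
    intro z
    refine Summable.of_norm (Summable.of_nonneg_of_le (fun n => norm_nonneg _) (fun n => ?_)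
      hsummR)
    show ‖a n • G n z‖ ≤ a n * (R ^ 2) ^ n
    rw [ContinuousMap.norm_le _ (mul_nonneg (ha n).le (by positivity))]
    intro w
    show ‖a n * G n z w‖ ≤ a n * (R ^ 2) ^ n
    rw [Real.norm_eq_abs, abs_mul, abs_of_pos (ha n)]
    refine mul_le_mul_of_nonneg_left ?_ (ha n).le
    have h9 := ContinuousMap.norm_coe_le_norm (G n z) w
    rw [Real.norm_eq_abs] at h9
    exact h9.trans (hGnorm n z)
  set K : Z → C(Z, ℝ) := fun z => ∑' n, a n • G n z with hKdef
  have hKhasSum : ∀ z, HasSum (fun n => a n • G n z) (K z) := fun z => (hKsum z).hasSum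
  have hKval : ∀ z w, K z w = f ⟪ρ z, ρ w⟫ := by
    intro z w
    have h2 := (ContinuousMap.evalCLM ℝ w).hasSum (hKhasSum z)
    have h3 : HasSum (fun n => a n * ⟪ρ z, ρ w⟫ ^ n) (K z w) := by
      convert h2 using 2 with n
      rfl
      rfl
    exact h3.unique (hf ⟪ρ z, ρ w⟫)
  -- main density claim
  set gc : C(Z, ℝ) := ⟨g, hg⟩ with hgc
  have key : gc ∈ closure ((Submodule.span ℝ (Set.range K) : Submodule ℝ C(Z, ℝ)) : Set C(Z, ℝ)) := by
    apply CS7.mem_closure_of_functionals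
    intro L hL
    have hLK : ∀ z, L (K z) = 0 := fun z =>
      hL _ (Submodule.subset_span (Set.mem_range_self z))
    -- Hilbert basis
    obtain ⟨ιs, b, -⟩ := exists_hilbertBasis ℝ H
    have hv : Orthonormal ℝ (⇑b) := b.orthonormal
    have htail : ∀ δ : ℝ, 0 < δ → ∃ S : Finset ↥ιs, ∀ w,
        ‖ρ w - CS7.pr (⇑b) S (ρ w)‖ ≤ δ := by
      intro δ hδ
      obtain ⟨S, hS⟩ := CS7.uniform_tail b ρ hρc hδ
      exact ⟨S, hS S (subset_refl S)⟩
    -- the functions F n and numbers bn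
    set F : ℕ → C(Z, ℝ) := fun n => CS7.FF ρ hρc L n with hFdef
    have hFapply : ∀ n z, F n z = L (G n z) := by
      intro n z
      rw [hFdef, CS7.FF_apply, hGP]
    set bn : ℕ → ℝ := fun n => L (F n) with hbndef
    have hFnorm : ∀ n, ‖F n‖ ≤ ‖L‖ * (R ^ 2) ^ n := by
      intro n
      rw [ContinuousMap.norm_le _ (by positivity)]
      intro z
      rw [hFapply]
      refine (L.le_opNorm _).trans ?_
      exact mul_le_mul_of_nonneg_left (hGnorm n z) (norm_nonneg L)
    have hFsummable : Summable fun n => a n • F n := by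
      refine Summable.of_norm (Summable.of_nonneg_of_le (fun n => norm_nonneg _) (fun n => ?_)
        (hsummR.mul_left ‖L‖))
      show ‖a n • F n‖ ≤ ‖L‖ * (a n * (R ^ 2) ^ n)
      rw [ContinuousMap.norm_le _ (mul_nonneg (norm_nonneg L)
        (mul_nonneg (ha n).le (by positivity)))]
      intro z
      show ‖a n * F n z‖ ≤ ‖L‖ * (a n * (R ^ 2) ^ n)
      rw [Real.norm_eq_abs, abs_mul, abs_of_pos (ha n)]
      have h9 := ContinuousMap.norm_coe_le_norm (F n) z
      rw [Real.norm_eq_abs] at h9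
      calc a n * |F n z| ≤ a n * (‖L‖ * (R ^ 2) ^ n) :=
            mul_le_mul_of_nonneg_left (h9.trans (hFnorm n)) (ha n).le
        _ = ‖L‖ * (a n * (R ^ 2) ^ n) := by ring
    have hFzero : HasSum (fun n => a n • F n) 0 := by
      have hΦ := hFsummable.hasSum
      have hΦval : (∑' n, a n • F n) = 0 := by
        ext z
        have h2 := (ContinuousMap.evalCLM ℝ z).hasSum hΦ
        have h3 : HasSum (fun n => L (a n • G n z)) ((∑' n, a n • F n) z) := by
          convert h2 using 2 with n
          have e1 : (a n • F n) z = a n * F n z := rfl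
          show L (a n • G n z) = (a n • F n) z
          rw [e1, hFapply, map_smul]
          rfl
          rfl
        have h4 := L.hasSum (hKhasSum z)
        rw [hLK z] at h4
        have := h3.unique h4
        rw [this]
        rfl
      rw [← hΦval]
      exact hΦ
    have hab : HasSum (fun n => a n * bn n) 0 := by
      have h2 := L.hasSum hFzero
      rw [map_zero] at h2
      convert h2 using 2 with n
      rw [map_smul]
      rfl
    -- nonnegativity of bn and vanishing
    have happrox : ∀ (n : ℕ) (S : Finset ↥ιs) (δ : ℝ), 0 ≤ δ →
        (∀ w, ‖ρ w - CS7.pr (⇑b) S (ρ w)‖ ≤ δ) →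
        |bn n - ∑ p ∈ Fintype.piFinset (fun _ : Fin n => S), (CS7.cc ρ hρc (⇑b) L n p) ^ 2|
          ≤ ‖L‖ ^ 2 * (n * (R ^ 2) ^ (n - 1) * (2 * R * δ)) := by
      intro n S δ hδ hS
      exact CS7.approx ρ hρc hv R hR0 hR L n S δ hδ hS
    have hbn_nonneg : ∀ n, 0 ≤ bn n := by
      intro n
      set C : ℝ := ‖L‖ ^ 2 * (n * (R ^ 2) ^ (n - 1) * (2 * R)) with hC
      have hC0 : 0 ≤ C := by rw [hC]; positivity
      have h2 : ∀ ε' : ℝ, 0 < ε' → -ε' ≤ bn n := by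
        intro ε' hε'
        have hδpos : 0 < ε' / (C + 1) := by positivity
        obtain ⟨S, hS⟩ := htail _ hδpos
        have h3 := happrox n S _ hδpos.le hS
        have h4 : ‖L‖ ^ 2 * (↑n * (R ^ 2) ^ (n - 1) * (2 * R * (ε' / (C + 1))))
            = C * (ε' / (C + 1)) := by rw [hC]; ring
        rw [h4] at h3
        have h5 : C * (ε' / (C + 1)) ≤ ε' := by
          rw [div_eq_mul_inv, ← mul_assoc]
          calc C * ε' * (C + 1)⁻¹ ≤ (C + 1) * ε' * (C + 1)⁻¹ := by
                have : C * ε' ≤ (C + 1) * ε' := by nlinarith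
                exact mul_le_mul_of_nonneg_right this (by positivity)
            _ = ε' := by field_simp
        have h6 : 0 ≤ ∑ p ∈ Fintype.piFinset (fun _ : Fin n => S),
            (CS7.cc ρ hρc (⇑b) L n p) ^ 2 :=
          Finset.sum_nonneg fun p _ => sq_nonneg _
        have h7 := abs_le.1 h3
        linarith [h7.1]
      by_contra h0
      push_neg at h0
      have := h2 (-(bn n) / 2) (by linarith)
      linarith
    have hbn0 : ∀ n, bn n = 0 := by
      intro n
      have h2 : a n * bn n ≤ 0 := le_hasSum hab n fun j _ =>
        mul_nonneg (ha j).le (hbn_nonneg j)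
      have h3 : 0 ≤ a n * bn n := mul_nonneg (ha n).le (hbn_nonneg n)
      have h4 : a n * bn n = 0 := le_antisymm h2 h3
      have := mul_eq_zero.1 h4
      rcases this with h | h
      · exact absurd h (ne_of_gt (ha n))
      · exact h
    -- all coefficients vanish
    have hc0 : ∀ (n : ℕ) (p : Fin n → ↥ιs), CS7.cc ρ hρc (⇑b) L n p = 0 := by
      intro n p
      set C : ℝ := ‖L‖ ^ 2 * (n * (R ^ 2) ^ (n - 1) * (2 * R)) with hC
      have hC0 : 0 ≤ C := by rw [hC]; positivity
      have h2 : ∀ ε' : ℝ, 0 < ε' → (CS7.cc ρ hρc (⇑b) L n p) ^ 2 ≤ ε' := by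
        intro ε' hε'
        have hδpos : 0 < ε' / (C + 1) := by positivity
        obtain ⟨S0, hS0⟩ := CS7.uniform_tail b ρ hρc hδpos
        set S : Finset ↥ιs := S0 ∪ Finset.image p Finset.univ with hSdef
        have hS : ∀ w, ‖ρ w - CS7.pr (⇑b) S (ρ w)‖ ≤ ε' / (C + 1) :=
          hS0 S Finset.subset_union_left
        have h3 := happrox n S _ hδpos.le hS
        rw [hbn0 n] at h3
        have h4 : ‖L‖ ^ 2 * (↑n * (R ^ 2) ^ (n - 1) * (2 * R * (ε' / (C + 1))))
            = C * (ε' / (C + 1)) := by rw [hC]; ring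
        rw [h4] at h3
        have h5 : C * (ε' / (C + 1)) ≤ ε' := by
          rw [div_eq_mul_inv, ← mul_assoc]
          calc C * ε' * (C + 1)⁻¹ ≤ (C + 1) * ε' * (C + 1)⁻¹ := by
                have : C * ε' ≤ (C + 1) * ε' := by nlinarith
                exact mul_le_mul_of_nonneg_right this (by positivity)
            _ = ε' := by field_simp
        have hpmem : p ∈ Fintype.piFinset (fun _ : Fin n => S) := by
          rw [Fintype.mem_piFinset]
          intro j
          exact Finset.mem_union_right _ (Finset.mem_image_of_mem p (Finset.mem_univ j))
        have h6 : (CS7.cc ρ hρc (⇑b) L n p) ^ 2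
            ≤ ∑ q ∈ Fintype.piFinset (fun _ : Fin n => S), (CS7.cc ρ hρc (⇑b) L n q) ^ 2 :=
          Finset.single_le_sum (f := fun q => (CS7.cc ρ hρc (⇑b) L n q) ^ 2)
            (fun q _ => sq_nonneg _) hpmem
        have h7 := abs_le.1 h3
        linarith [h7.2]
      have h8 : (CS7.cc ρ hρc (⇑b) L n p) ^ 2 ≤ 0 := CS7.le_zero_of_forall_le_eps h2
      have h9 : (CS7.cc ρ hρc (⇑b) L n p) ^ 2 = 0 := le_antisymm h8 (sq_nonneg _)
      exact pow_eq_zero_iff (by norm_num) |>.1 h9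
    -- monomials vanish, then L = 0 by Stone–Weierstrass
    have hmono : ∀ (n : ℕ) (x : Fin n → H), L (CS7.P ρ hρc n x) = 0 :=
      CS7.L_P_zero ρ hρc hv R hR0 hR L htail hc0
    exact CS7.L_zero ρ hρc hρi L hmono gc
  -- extract the approximation
  rw [Metric.mem_closure_iff] at key
  obtain ⟨q, hq, hdist⟩ := key ε hε
  obtain ⟨n, co, zs, hsum⟩ := Submodule.mem_span_set'.1 hq
  choose zz hzz using fun i => (zs i).2
  refine ⟨n, co, zz, fun w => ?_⟩
  have hqw : q w = ∑ i, co i * f ⟪ρ (zz i), ρ w⟫ := by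
    rw [← hsum]
    rw [ContinuousMap.coe_sum, Finset.sum_apply]
    refine Finset.sum_congr rfl fun i _ => ?_
    rw [ContinuousMap.coe_smul, Pi.smul_apply, smul_eq_mul]
    congr 1
    rw [← hKval (zz i) w, hzz i]
  have h2 : |g w - q w| ≤ ε := by
    have h3 : |gc w - q w| ≤ ‖gc - q‖ := by
      have := ContinuousMap.norm_coe_le_norm (gc - q) w
      simpa [Real.norm_eq_abs] using this
    have h4 : ‖gc - q‖ = dist gc q := (dist_eq_norm _ _).symm
    have : (gc : Z → ℝ) w = g w := rfl
    rw [this] at h3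
    rw [h4] at h3
    exact h3.trans hdist.le
  rw [hqw] at h2
  exact h2
end

section
/- Let I = {0 = t_0 < t_1 < ... < t_N = T}. The time-augmented signature map S, defined on discrete ℝ^d-valued paths x: I → ℝ^d by S(x) = ∏_{i=0}^N exp_⊗((t_i − t_{i−1}, x_{t_i} − x_{t_{i−1}})) (with t_{−1}=0, x_{t_{−1}}=0), is injective: S(x) = S(y) implies x = y. -/
open scoped BigOperators

/-- Coordinates of an element of the (completed) tensor algebra `T((ℝ^d))` with
respect to the word basis: the level-`n` component is indexed by words
`Fin n → Fin d`. -/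
def TSeq (d : ℕ) := (n : ℕ) → (Fin n → Fin d) → ℝ

/-- The tensor-algebra (Chen) product in word coordinates. -/
noncomputable def tmul {d : ℕ} (a b : TSeq d) : TSeq d := fun n w =>
  ∑ k : Fin (n + 1),
    a k.1 (fun j => w ⟨j.1, by have := j.isLt; have := k.isLt; omega⟩) *
      b (n - k.1) (fun j => w ⟨k.1 + j.1, by have := j.isLt; have := k.isLt; omega⟩)

/-- The unit of the tensor algebra in word coordinates. -/
def tone (d : ℕ) : TSeq d := fun n _ => if n = 0 then 1 else 0

/-- The tensor exponential `exp_⊗(v) = ∑ v^{⊗n}/n!` in word coordinates. -/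
noncomputable def texp {d : ℕ} (v : Fin d → ℝ) : TSeq d :=
  fun n w => (∏ j, v (w j)) / (n.factorial : ℝ)

noncomputable def Dm (p q : ℝ) (a : ℕ) : ℝ :=
  (∑ r ∈ Finset.range (a+1), p^r * q^(a-r)) / (a+1).factorial

lemma binom_aux (u s : ℝ) (n : ℕ) :
    ∑ k ∈ Finset.range (n+1), u^k / k.factorial * (s^(n-k) / (n-k).factorial)
      = (u+s)^n / n.factorial := by
  rw [add_pow, Finset.sum_div]
  refine Finset.sum_congr rfl fun k hk => ?_
  have hk' : k ≤ n := Nat.lt_succ_iff.mp (Finset.mem_range.mp hk)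
  have h3 : (n.factorial : ℝ) = (n.choose k : ℝ) * k.factorial * (n-k).factorial := by
    exact_mod_cast (Nat.choose_mul_factorial_mul_factorial hk').symm
  have h1 : (k.factorial : ℝ) ≠ 0 := Nat.cast_ne_zero.mpr k.factorial_ne_zero
  have h2 : ((n-k).factorial : ℝ) ≠ 0 := Nat.cast_ne_zero.mpr (n-k).factorial_ne_zero
  have hc : ((n.choose k : ℕ) : ℝ) ≠ 0 := Nat.cast_ne_zero.mpr (Nat.choose_pos hk' |>.ne')
  rw [h3]
  field_simp

lemma binom_aux2 (u s : ℝ) (a : ℕ) :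
    ∑ k ∈ Finset.range (a+1), u^k / k.factorial * (s^(a+1-k) / (a+1-k).factorial)
      = ((u+s)^(a+1) - u^(a+1)) / (a+1).factorial := by
  have h := binom_aux u s (a+1)
  rw [Finset.sum_range_succ] at h
  simp only [Nat.sub_self, pow_zero, Nat.factorial_zero, Nat.cast_one, div_one, mul_one] at h
  have : ∑ k ∈ Finset.range (a+1), u^k / k.factorial * (s^(a+1-k) / (a+1-k).factorial)
      = (u+s)^(a+1) / (a+1).factorial - u^(a+1) / (a+1).factorial := by linarith
  rw [this, sub_div]

@[simp] lemma Dm_zero (p q : ℝ) : Dm p q 0 = 1 := by simp [Dm]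

lemma Dm_self (p : ℝ) (a : ℕ) : Dm p p a = p^a / a.factorial := by
  have h1 : ∀ r ∈ Finset.range (a+1), p^r * p^(a-r) = p^a := by
    intro r hr
    rw [← pow_add]
    congr 1
    have := Finset.mem_range.mp hr
    omega
  have h : (∑ r ∈ Finset.range (a+1), p^r * p^(a-r)) = ((a+1 : ℕ) : ℝ) * p^a := by
    rw [Finset.sum_congr rfl h1, Finset.sum_const, Finset.card_range, nsmul_eq_mul]
  rw [Dm, h, Nat.factorial_succ]
  have hne : (((a+1 : ℕ)) : ℝ) ≠ 0 := by positivity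
  push_cast at hne ⊢
  rw [mul_div_mul_left _ _ hne]

lemma Dm_zero_left (q : ℝ) (a : ℕ) : Dm 0 q a = q^a / (a+1).factorial := by
  rw [Dm]
  congr 1
  rw [Finset.sum_eq_single 0]
  · simp
  · intro b _ hb0; simp [zero_pow hb0]
  · intro habs; exact absurd (Finset.mem_range.mpr (by omega)) habs

lemma sub_mul_Dm (p q : ℝ) (a : ℕ) :
    (q - p) * Dm p q a = (q^(a+1) - p^(a+1)) / (a+1).factorial := by
  have hg := geom_sum₂_mul q p (a+1)
  have hr : (∑ i ∈ Finset.range (a+1), q^i * p^(a+1-1-i))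
      = ∑ r ∈ Finset.range (a+1), p^r * q^(a-r) := by
    rw [← Finset.sum_range_reflect (fun r => p^r * q^(a-r)) (a+1)]
    refine Finset.sum_congr rfl fun j hj => ?_
    have hj' : j ≤ a := Nat.lt_succ_iff.mp (Finset.mem_range.mp hj)
    have e2 : a-(a+1-1-j) = j := by omega
    rw [e2, mul_comm]
  rw [hr] at hg
  rw [Dm]
  rw [mul_comm, div_mul_eq_mul_div, hg]

lemma Dm_key (u p q : ℝ) (a : ℕ) :
    ∑ k ∈ Finset.range (a+1), u^k / k.factorial * Dm p q (a-k) = Dm (u+p) (u+q) a := by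
  rcases eq_or_ne p q with rfl | hpq
  · calc ∑ k ∈ Finset.range (a+1), u^k / k.factorial * Dm p p (a-k)
        = ∑ k ∈ Finset.range (a+1), u^k / k.factorial * (p^(a-k) / (a-k).factorial) := by
          refine Finset.sum_congr rfl fun k _ => by rw [Dm_self]
      _ = (u+p)^a / a.factorial := binom_aux u p a
      _ = Dm (u+p) (u+p) a := (Dm_self _ _).symm
  · have hqp : q - p ≠ 0 := sub_ne_zero.mpr (Ne.symm hpq)
    apply mul_left_cancel₀ hqp
    rw [Finset.mul_sum]
    have step : ∀ k ∈ Finset.range (a+1), (q - p) * (u^k / k.factorial * Dm p q (a-k))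
        = u^k / k.factorial * (q^(a+1-k)/(a+1-k).factorial)
          - u^k / k.factorial * (p^(a+1-k)/(a+1-k).factorial) := by
      intro k hk
      have hk' : k ≤ a := Nat.lt_succ_iff.mp (Finset.mem_range.mp hk)
      have hD := sub_mul_Dm p q (a-k)
      have e : a-k+1 = a+1-k := by omega
      rw [e] at hD
      calc (q-p) * (u^k / k.factorial * Dm p q (a-k))
          = u^k / k.factorial * ((q-p) * Dm p q (a-k)) := by ring
        _ = u^k / k.factorial * ((q^(a+1-k) - p^(a+1-k))/(a+1-k).factorial) := by rw [hD]
        _ = _ := by ring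
    rw [Finset.sum_congr rfl step, Finset.sum_sub_distrib, binom_aux2 u q a, binom_aux2 u p a]
    have h2 : (q - p) * Dm (u+p) (u+q) a = ((u+q)^(a+1) - (u+p)^(a+1))/(a+1).factorial := by
      have h3 := sub_mul_Dm (u+p) (u+q) a
      have e : u + q - (u + p) = q - p := by ring
      rw [e] at h3
      exact h3
    rw [h2]
    ring


lemma tmul_apply {d : ℕ} (A B : TSeq (d+1)) (n : ℕ) (w : Fin n → Fin (d+1)) :
    tmul A B n w = ∑ k ∈ Finset.range (n+1),
      A k (fun j => if h : (j:ℕ) < n then w ⟨j,h⟩ else 0) *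
      B (n-k) (fun j => if h : k+(j:ℕ) < n then w ⟨k+(j:ℕ),h⟩ else 0) := by
  rw [tmul, ← Fin.sum_univ_eq_sum_range]
  refine Finset.sum_congr rfl fun k _ => ?_
  congr 1
  · congr 1
    funext j
    have h : (j:ℕ) < n := by have := j.isLt; have := k.isLt; omega
    rw [dif_pos h]
  · congr 1
    funext j
    have h : (k:ℕ)+(j:ℕ) < n := by have := j.isLt; have := k.isLt; omega
    rw [dif_pos h]

lemma tseq_congr {D : ℕ} (A : TSeq D) {n m : ℕ} (h : n = m) {f : Fin n → Fin D} {g : Fin m → Fin D}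
    (hfg : ∀ j : Fin n, f j = g ⟨j.1, h ▸ j.isLt⟩) : A n f = A m g := by
  subst h
  exact congrArg (A n) (funext hfg)

noncomputable def prodL {d : ℕ} (L : List (Fin (d+1) → ℝ)) : TSeq (d+1) :=
  L.foldr (fun v acc => tmul (texp v) acc) (tone (d+1))

lemma prodL_zero {d : ℕ} (L : List (Fin (d+1) → ℝ)) (w : Fin 0 → Fin (d+1)) :
    prodL L 0 w = 1 := by
  induction L generalizing w with
  | nil => simp [prodL, tone]
  | cons v L ih =>
    show tmul (texp v) (prodL L) 0 w = 1
    rw [tmul_apply]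
    simp [texp, ih]


def wrd (d a : ℕ) (c : Fin d) : Fin (a+1) → Fin (d+1) :=
  fun k => if (k : ℕ) = a then Fin.succ c else 0

noncomputable def SS {d : ℕ} (L : List (Fin (d+1) → ℝ)) (i : ℕ) : ℝ :=
  ((L.take i).map (fun v => v 0)).sum

@[simp] lemma SS_zero {d : ℕ} (L : List (Fin (d+1) → ℝ)) : SS L 0 = 0 := by simp [SS]

@[simp] lemma SS_cons_succ {d : ℕ} (v : Fin (d+1) → ℝ) (L : List (Fin (d+1) → ℝ)) (i : ℕ) :
    SS (v :: L) (i+1) = v 0 + SS L i := by simp [SS]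

lemma SS_succ {d : ℕ} (L : List (Fin (d+1) → ℝ)) (i : ℕ) (h : i < L.length) :
    SS L (i+1) = SS L i + (L.getD i (fun _ => 0)) 0 := by
  simp only [SS, List.take_succ, List.getElem?_eq_getElem h, Option.toList_some, List.map_append,
    List.sum_append, List.map_cons, List.map_nil, List.sum_cons, List.sum_nil, add_zero,
    List.getD_eq_getElem?_getD, List.getElem?_eq_getElem h, Option.getD_some]

lemma prodL_word {d : ℕ} (L : List (Fin (d+1) → ℝ)) (a : ℕ) (c : Fin d) :
    prodL L (a+1) (wrd d a c) =
      ∑ i ∈ Finset.range L.length,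
        (L.getD i (fun _ => 0)) (Fin.succ c) * Dm (SS L i) (SS L (i+1)) a := by
  induction L generalizing a with
  | nil => simp [prodL, tone]
  | cons v L ih =>
    have expand : ∀ k ∈ Finset.range (a+2),
        texp v k (fun j => if h : (j:ℕ) < a+1 then wrd d a c ⟨j,h⟩ else 0) *
        prodL L (a+1-k) (fun j => if h : k+(j:ℕ) < a+1 then wrd d a c ⟨k+(j:ℕ),h⟩ else 0)
        = if k = a+1 then v (Fin.succ c) * ((v 0)^a / (a+1).factorial)
          else (v 0)^k / k.factorial *
            ∑ i ∈ Finset.range L.length,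
              (L.getD i (fun _ => 0)) (Fin.succ c) * Dm (SS L i) (SS L (i+1)) (a-k) := by
      intro k hk
      have hk2 : k < a+2 := Finset.mem_range.mp hk
      by_cases hka : k = a+1
      · subst hka
        rw [if_pos rfl]
        have hf : (fun j : Fin (a+1) => if h : (j:ℕ) < a+1 then wrd d a c ⟨(j:ℕ),h⟩ else 0)
            = wrd d a c := by
          funext j
          rw [dif_pos j.isLt]
        rw [hf, Nat.sub_self, prodL_zero, mul_one]
        show (∏ j, v (wrd d a c j)) / (((a+1).factorial : ℕ) : ℝ) = _
        rw [Fin.prod_univ_castSucc]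
        have h1 : wrd d a c (Fin.last a) = Fin.succ c := by simp [wrd]
        have h2 : ∀ j : Fin a, v (wrd d a c j.castSucc) = v 0 := by
          intro j
          congr 1
          simp only [wrd]
          rw [if_neg (by rw [Fin.coe_castSucc]; have := j.isLt; omega)]
        rw [h1, Finset.prod_congr rfl (fun j _ => h2 j), Finset.prod_const, Finset.card_univ,
          Fintype.card_fin]
        push_cast
        ring
      · have hk' : k ≤ a := by omega
        rw [if_neg hka]
        have hf : (fun j : Fin k => if h : (j:ℕ) < a+1 then wrd d a c ⟨(j:ℕ),h⟩ else 0)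
            = fun _ => (0 : Fin (d+1)) := by
          funext j
          have hj : (j:ℕ) < a+1 := by have := j.isLt; omega
          rw [dif_pos hj]
          show (if ((j:ℕ) : ℕ) = a then Fin.succ c else 0) = 0
          rw [if_neg (by have := j.isLt; omega)]
        rw [hf]
        have htexp : texp v k (fun _ => (0:Fin (d+1))) = (v 0)^k / k.factorial := by
          simp [texp, Finset.prod_const, Finset.card_univ]
        rw [htexp]
        have hsub : a+1-k = (a-k)+1 := by omega
        have hw : prodL L (a+1-k) (fun j => if h : k+(j:ℕ) < a+1 then wrd d a c ⟨k+(j:ℕ),h⟩ else 0)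
            = prodL L ((a-k)+1) (wrd d (a-k) c) := by
          refine tseq_congr (prodL L) hsub ?_
          intro j
          have hj : k+(j:ℕ) < a+1 := by have := j.isLt; omega
          rw [dif_pos hj]
          show (if k+(j:ℕ) = a then Fin.succ c else 0) = (if ((j:ℕ) : ℕ) = a-k then Fin.succ c else 0)
          by_cases hj2 : (j:ℕ) = a-k
          · rw [if_pos (by omega), if_pos hj2]
          · rw [if_neg (by omega), if_neg hj2]
        rw [hw, ih]
    show tmul (texp v) (prodL L) (a+1) (wrd d a c) = _
    rw [tmul_apply, Finset.sum_range_succ, Finset.sum_congr rfl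
      (fun k hk => expand k (Finset.mem_range.mpr (by have := Finset.mem_range.mp hk; omega))),
      expand (a+1) (Finset.mem_range.mpr (by omega))]
    rw [if_pos rfl]
    have hrest : ∑ k ∈ Finset.range (a+1),
        (if k = a+1 then v (Fin.succ c) * ((v 0)^a / (a+1).factorial)
          else (v 0)^k / k.factorial *
            ∑ i ∈ Finset.range L.length,
              (L.getD i (fun _ => 0)) (Fin.succ c) * Dm (SS L i) (SS L (i+1)) (a-k))
        = ∑ i ∈ Finset.range L.length,
            (L.getD i (fun _ => 0)) (Fin.succ c) * Dm (v 0 + SS L i) (v 0 + SS L (i+1)) a := by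
      rw [Finset.sum_congr rfl (fun k hk => if_neg (by have := Finset.mem_range.mp hk; omega))]
      simp_rw [Finset.mul_sum]
      rw [Finset.sum_comm]
      refine Finset.sum_congr rfl fun i _ => ?_
      rw [← Dm_key (v 0) (SS L i) (SS L (i+1)) a, Finset.mul_sum]
      refine Finset.sum_congr rfl fun k _ => by ring
    rw [hrest]
    show _ = ∑ i ∈ Finset.range (L.length + 1),
        ((v :: L).getD i (fun _ => 0)) (Fin.succ c) * Dm (SS (v::L) i) (SS (v::L) (i+1)) a
    rw [Finset.sum_range_succ']
    simp only [List.getD_cons_succ, List.getD_cons_zero, SS_cons_succ, SS_zero, add_zero]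
    rw [Dm_zero_left]


/-- The time-augmented signature of a discrete path `x : I → ℝ^d` on the grid
`I = {t 0 < … < t N}`:  `S(x) = ∏_{i=0}^N exp_⊗((t_i − t_{i−1}, x_{t_i} − x_{t_{i−1}}))`
with the conventions `t_{−1} = 0`, `x_{t_{−1}} = 0`. -/
noncomputable def sig (d N : ℕ) (t : ℕ → ℝ) (x : ℕ → Fin d → ℝ) : TSeq (d + 1) :=
  (List.range (N + 1)).foldr
    (fun i acc =>
      tmul
        (texp (Fin.cons (t i - (if i = 0 then 0 else t (i - 1)))
          (fun j => x i j - (if i = 0 then 0 else x (i - 1) j))))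
        acc)
    (tone (d + 1))

lemma sig_word {d N : ℕ} (t : ℕ → ℝ) (x : ℕ → Fin d → ℝ) (a : ℕ) (c : Fin d) :
    sig d N t x (a+1) (wrd d a c) =
      ∑ i ∈ Finset.range (N+1),
        (x i c - (if i = 0 then 0 else x (i-1) c)) * Dm (if i = 0 then 0 else t (i-1)) (t i) a := by
  set F : ℕ → (Fin (d+1) → ℝ) := fun i =>
    Fin.cons (t i - (if i = 0 then 0 else t (i-1)))
      (fun j => x i j - (if i = 0 then 0 else x (i-1) j)) with hF
  have hsig : sig d N t x = prodL ((List.range (N+1)).map F) := by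
    rw [prodL, List.foldr_map]
    rfl
  rw [hsig, prodL_word]
  have hlen : ((List.range (N+1)).map F).length = N+1 := by simp
  rw [hlen]
  have hget : ∀ i, i < N+1 → ((List.range (N+1)).map F).getD i (fun _ => 0) = F i := by
    intro i hi
    rw [List.getD_eq_getElem?_getD]
    simp [hi]
  have hSS : ∀ i, i ≤ N+1 → SS ((List.range (N+1)).map F) i = (if i = 0 then 0 else t (i-1)) := by
    intro i hi
    induction i with
    | zero => simp
    | succ m ihm =>
      have hm : m < ((List.range (N+1)).map F).length := by rw [hlen]; omega
      rw [SS_succ _ _ hm, ihm (by omega), hget m (by omega)]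
      simp only [hF, Fin.cons_zero]
      by_cases hm0 : m = 0
      · subst hm0; simp
      · rw [if_neg hm0, if_neg (by omega : ¬ (m+1 = 0))]
        simp only [Nat.add_sub_cancel]
        ring
  refine Finset.sum_congr rfl fun i hi => ?_
  have hi' : i < N+1 := Finset.mem_range.mp hi
  rw [hget i hi', hSS i (by omega), hSS (i+1) (by omega)]
  simp only [hF, Fin.cons_succ, Nat.add_sub_cancel, if_neg (by omega : ¬ (i+1 = 0))]

lemma extract {N : ℕ} (t : ℕ → ℝ) (ht0 : t 0 = 0) (hmono : ∀ i < N, t i < t (i+1))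
    (g : ℕ → ℝ)
    (hg : ∀ a, ∑ i ∈ Finset.range (N+1), g i * Dm (if i = 0 then 0 else t (i-1)) (t i) a = 0) :
    ∀ i ≤ N, g i = 0 := by
  have tmono : ∀ i j, i < j → j ≤ N → t i < t j := by
    intro i j hij hjN
    induction j with
    | zero => omega
    | succ m ihm =>
      rcases Nat.lt_succ_iff_lt_or_eq.mp hij with hc | hc
      · exact lt_trans (ihm hc (by omega)) (hmono m (by omega))
      · subst hc; exact hmono i (by omega)
  have tne : ∀ i j, i ≤ N → j ≤ N → i ≠ j → t i ≠ t j := by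
    intro i j hi hj hij
    rcases lt_or_gt_of_ne hij with hc | hc
    · exact ne_of_lt (tmono i j hc hj)
    · exact (ne_of_lt (tmono j i hc hi)).symm
  have tpos : ∀ i, 1 ≤ i → i ≤ N → 0 < t i := fun i h1 hN => ht0 ▸ tmono 0 i h1 hN
  set g' : ℕ → ℝ := fun i => if i = 0 then 0 else g i / (t i - t (i-1)) with hg'
  have E2 : ∀ m : ℕ, ∑ i ∈ Finset.range (N+1),
      g' i * (t i ^ (m+2) - (if i = 0 then 0 else t (i-1)) ^ (m+2)) = 0 := by
    intro m
    have h1 := hg (m+1)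
    have hterm : ∀ i ∈ Finset.range (N+1),
        g' i * (t i ^ (m+2) - (if i = 0 then 0 else t (i-1)) ^ (m+2))
        = (((m+2).factorial : ℕ) : ℝ) * (g i * Dm (if i = 0 then 0 else t (i-1)) (t i) (m+1)) := by
      intro i hi
      by_cases hi0 : i = 0
      · subst hi0
        simp only [reduceIte, hg', ht0]
        rw [Dm_zero_left, zero_pow (by omega : m+1 ≠ 0), zero_div]
        simp
      · rw [if_neg hi0]
        simp only [hg', if_neg hi0]
        have hiN : i ≤ N := by have := Finset.mem_range.mp hi; omega
        have hΔ : t i - t (i-1) ≠ 0 :=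
          sub_ne_zero.mpr (tne i (i-1) hiN (by omega) (by omega))
        have hD := sub_mul_Dm (t (i-1)) (t i) (m+1)
        have hfac : (((m+1+1).factorial : ℕ) : ℝ) ≠ 0 :=
          Nat.cast_ne_zero.mpr (Nat.factorial_ne_zero _)
        have hD' : t i ^ (m+2) - t (i-1) ^ (m+2)
            = (((m+2).factorial : ℕ) : ℝ) * ((t i - t (i-1)) * Dm (t (i-1)) (t i) (m+1)) := by
          rw [hD]
          rw [mul_div_cancel₀ _ hfac]
        rw [hD']
        field_simp
    rw [Finset.sum_congr rfl hterm, ← Finset.mul_sum, h1, mul_zero]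
  have key : ∀ (Q : Polynomial ℝ),
      ∑ i ∈ Finset.range (N+1), g' i * ((t i)^2 * Q.eval (t i)
        - (if i = 0 then 0 else t (i-1))^2 * Q.eval (if i = 0 then 0 else t (i-1))) = 0 := by
    intro Q
    have expand : ∀ z : ℝ, z^2 * Q.eval z
        = ∑ m ∈ Finset.range (Q.natDegree + 1), Q.coeff m * z^(m+2) := by
      intro z
      rw [Polynomial.eval_eq_sum_range, Finset.mul_sum]
      refine Finset.sum_congr rfl fun m _ => by ring
    have hterm : ∀ i ∈ Finset.range (N+1),
        g' i * ((t i)^2 * Q.eval (t i)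
          - (if i = 0 then 0 else t (i-1))^2 * Q.eval (if i = 0 then 0 else t (i-1)))
        = ∑ m ∈ Finset.range (Q.natDegree+1),
            Q.coeff m * (g' i * (t i^(m+2) - (if i = 0 then 0 else t (i-1))^(m+2))) := by
      intro i _
      rw [expand, expand, ← Finset.sum_sub_distrib, Finset.mul_sum]
      refine Finset.sum_congr rfl fun m _ => by ring
    rw [Finset.sum_congr rfl hterm, Finset.sum_comm]
    refine Finset.sum_eq_zero fun m _ => ?_
    rw [← Finset.mul_sum, E2 m, mul_zero]
  have vanish : ∀ k, ∀ i, i ≤ N → i ≠ k →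
      (t i)^2 * ∏ j ∈ (Finset.Icc 1 N).erase k, (t i - t j) = 0 := by
    intro k i hiN hik
    by_cases hi0 : i = 0
    · subst hi0; rw [ht0]; ring_nf
    · have hmem : i ∈ (Finset.Icc 1 N).erase k := by
        rw [Finset.mem_erase, Finset.mem_Icc]; omega
      rw [Finset.prod_eq_zero hmem (sub_self (t i)), mul_zero]
  have Pkne : ∀ k, 1 ≤ k → k ≤ N →
      (t k)^2 * ∏ j ∈ (Finset.Icc 1 N).erase k, (t k - t j) ≠ 0 := by
    intro k hk1 hkN
    refine mul_ne_zero (pow_ne_zero _ (ne_of_gt (tpos k hk1 hkN))) ?_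
    rw [Finset.prod_ne_zero_iff]
    intro j hj
    rw [Finset.mem_erase, Finset.mem_Icc] at hj
    exact sub_ne_zero.mpr (tne k j hkN hj.2.2 (Ne.symm hj.1))
  have punch : ∀ k, 1 ≤ k → k ≤ N →
      (g' k - (if k + 1 ≤ N then g' (k+1) else 0)) *
        ((t k)^2 * ∏ j ∈ (Finset.Icc 1 N).erase k, (t k - t j)) = 0 := by
    intro k hk1 hkN
    have hkey := key (∏ j ∈ (Finset.Icc 1 N).erase k, (Polynomial.X - Polynomial.C (t j)))
    have heval : ∀ z : ℝ, Polynomial.eval z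
        (∏ j ∈ (Finset.Icc 1 N).erase k, (Polynomial.X - Polynomial.C (t j)))
        = ∏ j ∈ (Finset.Icc 1 N).erase k, (z - t j) := by
      intro z; simp [Polynomial.eval_prod]
    simp only [heval] at hkey
    set Pk : ℝ := (t k)^2 * ∏ j ∈ (Finset.Icc 1 N).erase k, (t k - t j) with hPk
    have termform : ∀ i ∈ Finset.range (N+1),
        g' i * ((t i)^2 * ∏ j ∈ (Finset.Icc 1 N).erase k, (t i - t j)
          - (if i = 0 then 0 else t (i-1))^2 *
              ∏ j ∈ (Finset.Icc 1 N).erase k, ((if i = 0 then 0 else t (i-1)) - t j))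
        = (if i = k then g' k * Pk else 0) + (if i = k+1 then -(g' (k+1) * Pk) else 0) := by
      intro i hi
      have hiN : i ≤ N := by have := Finset.mem_range.mp hi; omega
      by_cases hi0 : i = 0
      · subst hi0
        rw [if_neg (by omega : ¬ ((0:ℕ) = k)), if_neg (by omega : ¬ ((0:ℕ) = k+1))]
        simp [hg']
      · rw [if_neg hi0]
        have hiN1 : i - 1 ≤ N := by omega
        by_cases hik : i = k
        · subst hik
          rw [if_pos rfl, if_neg (by omega), vanish i (i-1) hiN1 (by omega), add_zero,
            sub_zero]
        · rw [if_neg hik]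
          by_cases hik1 : i = k+1
          · subst hik1
            rw [if_pos rfl, vanish k (k+1) hiN (by omega), zero_add]
            have : k+1-1 = k := by omega
            rw [this]
            ring
          · rw [if_neg hik1, vanish k i hiN hik, vanish k (i-1) hiN1 (by omega), sub_zero,
              mul_zero, add_zero]
    rw [Finset.sum_congr rfl termform, Finset.sum_add_distrib,
      Finset.sum_ite_eq' (Finset.range (N+1)) k (fun _ => g' k * Pk),
      Finset.sum_ite_eq' (Finset.range (N+1)) (k+1) (fun _ => -(g' (k+1) * Pk)),
      if_pos (Finset.mem_range.mpr (by omega : k < N+1))] at hkey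
    by_cases hk1N : k + 1 ≤ N
    · rw [if_pos (Finset.mem_range.mpr (by omega : k+1 < N+1))] at hkey
      rw [if_pos hk1N, sub_mul]
      linarith
    · rw [if_neg (by rw [Finset.mem_range]; omega : ¬ (k+1 ∈ Finset.range (N+1)))] at hkey
      rw [if_neg hk1N, sub_zero]
      linarith
  have down : ∀ m k, 1 ≤ k → k ≤ N → N - k ≤ m → g' k = 0 := by
    intro m
    induction m with
    | zero =>
      intro k hk1 hkN hm
      have hkN' : k = N := by omega
      have hp := punch k hk1 hkN
      rw [if_neg (by omega), sub_zero] at hp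
      rcases mul_eq_zero.mp hp with hc | hc
      · exact hc
      · exact absurd hc (Pkne k hk1 hkN)
    | succ m ihm =>
      intro k hk1 hkN hm
      by_cases hkN' : k = N
      · have hp := punch k hk1 hkN
        rw [if_neg (by omega), sub_zero] at hp
        rcases mul_eq_zero.mp hp with hc | hc
        · exact hc
        · exact absurd hc (Pkne k hk1 hkN)
      · have hk1' : k+1 ≤ N := by omega
        have h2 := ihm (k+1) (by omega) hk1' (by omega)
        have hp := punch k hk1 hkN
        rw [if_pos hk1', h2, sub_zero] at hp
        rcases mul_eq_zero.mp hp with hc | hc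
        · exact hc
        · exact absurd hc (Pkne k hk1 hkN)
  have hgi : ∀ i, 1 ≤ i → i ≤ N → g i = 0 := by
    intro i h1 hN
    have hz := down (N - i) i h1 hN le_rfl
    simp only [hg', if_neg (by omega : ¬ i = 0)] at hz
    have hΔ : t i - t (i-1) ≠ 0 := sub_ne_zero.mpr (tne i (i-1) hN (by omega) (by omega))
    exact (div_eq_zero_iff.mp hz).resolve_right hΔ
  intro i hiN
  rcases Nat.eq_zero_or_pos i with rfl | hpos
  · have h0 := hg 0
    simp only [Dm_zero, mul_one] at h0
    rwa [Finset.sum_eq_single_of_mem 0 (Finset.mem_range.mpr (by omega))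
      (fun b hb hb0 => hgi b (by omega) (by have := Finset.mem_range.mp hb; omega))] at h0
  · exact hgi i hpos hiN


/- STATEMENT 8: the time-augmented signature map on discrete paths over the
grid `I = {0 = t_0 < t_1 < … < t_N = T}` is injective: `S(x) = S(y) → x = y`
(on the grid). -/
theorem statement8 {d N : ℕ} (t : ℕ → ℝ) (ht0 : t 0 = 0)
    (hmono : ∀ i < N, t i < t (i + 1))
    (x y : ℕ → Fin d → ℝ)
    (h : sig d N t x = sig d N t y) :
    ∀ i ≤ N, x i = y i := by
  have hinc : ∀ (c : Fin d) i, i ≤ N →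
      (x i c - (if i = 0 then 0 else x (i-1) c)) = (y i c - (if i = 0 then 0 else y (i-1) c)) := by
    intro c
    have hzero := extract t ht0 hmono
      (fun i => (x i c - (if i = 0 then 0 else x (i-1) c))
        - (y i c - (if i = 0 then 0 else y (i-1) c))) ?_
    · intro i hi
      have := hzero i hi
      linarith
    · intro a
      have heq : sig d N t x (a+1) (wrd d a c) = sig d N t y (a+1) (wrd d a c) := by rw [h]
      rw [sig_word, sig_word] at heq
      rw [Finset.sum_congr rfl (fun i _ => sub_mul
        (x i c - (if i = 0 then 0 else x (i-1) c))
        (y i c - (if i = 0 then 0 else y (i-1) c))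
        (Dm (if i = 0 then 0 else t (i-1)) (t i) a)),
        Finset.sum_sub_distrib, heq, sub_self]
  intro i
  induction i with
  | zero =>
    intro _
    funext c
    have := hinc c 0 (by omega)
    simpa using this
  | succ m ihm =>
    intro hi
    funext c
    have hm := congrFun (ihm (by omega)) c
    have hstep := hinc c (m+1) hi
    rw [if_neg (by omega : ¬ (m+1 = 0)), if_neg (by omega : ¬ (m+1 = 0))] at hstep
    simp only [Nat.add_sub_cancel] at hstep
    linarith
end

section
/- Let I be a finite time grid and K ⊂ ℝ^d compact. For every M > 0 there exists a constant C = C(M, T) such that for all discrete paths x, y: I → ℝ^d with total variation ‖x‖_{1-var}, ‖y‖_{1-var} ≤ M, the time-augmented signatures satisfy ‖S(x) − S(y)‖ ≤ C ‖x − y‖_{1-var}, where ‖x‖_{1-var} := ∑_i ‖x_{t_i} − x_{t_{i−1}}‖ and the signature norm is that of the Hilbert space of square-summable tensor sequences. -/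
open scoped BigOperators

/-- The Hilbert norm on square-summable tensor sequences, in the orthonormal
word basis: `‖a‖ = (∑_n ∑_{|w| = n} (a_n(w))²)^{1/2}`. -/
noncomputable def tseqNorm {d : ℕ} (a : TSeq d) : ℝ :=
  Real.sqrt (∑' n : ℕ, ∑ w : Fin n → Fin d, (a n w) ^ 2)

/-- The 1-variation norm `‖x‖_{1-var} = ∑_{i=0}^N ‖x_{t_i} − x_{t_{i−1}}‖`
(convention `x_{t_{−1}} = 0`). -/
noncomputable def oneVar {d : ℕ} (N : ℕ) (x : ℕ → EuclideanSpace ℝ (Fin d)) : ℝ :=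
  ∑ i ∈ Finset.range (N + 1), ‖x i - (if i = 0 then 0 else x (i - 1))‖

/- STATEMENT 9: local Lipschitz continuity of the time-augmented signature in
1-variation: for every `M > 0` there is `C = C(M, T)` with
`‖S(x) − S(y)‖ ≤ C ‖x − y‖_{1-var}` whenever `‖x‖_{1-var}, ‖y‖_{1-var} ≤ M`,
the signature norm being that of the Hilbert space of square-summable tensor
sequences. -/
namespace S9Aux

noncomputable def Efun (c : ℝ) (n : ℕ) : ℝ := c ^ n / (n.factorial : ℝ)

noncomputable def Dfun (c : ℝ) (n : ℕ) : ℝ :=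
  if n = 0 then 0 else c ^ (n - 1) / ((n - 1).factorial : ℝ)

def Bnd {d : ℕ} (a : TSeq d) (f : ℕ → ℝ) : Prop := ∀ n w, |a n w| ≤ f n

lemma Bnd.mono {d : ℕ} {a : TSeq d} {f g : ℕ → ℝ} (h : Bnd a f) (hfg : ∀ n, f n ≤ g n) :
    Bnd a g := fun n w => (h n w).trans (hfg n)

lemma Efun_nonneg {c : ℝ} (hc : 0 ≤ c) (n : ℕ) : 0 ≤ Efun c n :=
  div_nonneg (pow_nonneg hc n) (Nat.cast_nonneg _)

lemma Dfun_nonneg {c : ℝ} (hc : 0 ≤ c) (n : ℕ) : 0 ≤ Dfun c n := by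
  unfold Dfun; split
  · exact le_refl 0
  · exact div_nonneg (pow_nonneg hc _) (Nat.cast_nonneg _)

lemma Dfun_mono {c c' : ℝ} (hc : 0 ≤ c) (hcc : c ≤ c') (n : ℕ) : Dfun c n ≤ Dfun c' n := by
  unfold Dfun; split
  · exact le_refl 0
  · gcongr

lemma bnd_tmul {d : ℕ} {a b : TSeq d} {f g : ℕ → ℝ}
    (ha : Bnd a f) (hb : Bnd b g) :
    Bnd (tmul a b) (fun n => ∑ k ∈ Finset.range (n + 1), f k * g (n - k)) := by
  intro n w
  unfold tmul
  refine le_trans (Finset.abs_sum_le_sum_abs _ _) ?_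
  show _ ≤ ∑ k ∈ Finset.range (n + 1), f k * g (n - k)
  rw [← Fin.sum_univ_eq_sum_range (fun k => f k * g (n - k)) (n + 1)]
  refine Finset.sum_le_sum fun k _ => ?_
  rw [abs_mul]
  refine mul_le_mul (ha _ _) (hb _ _) (abs_nonneg _) ?_
  exact le_trans (abs_nonneg _)
    (ha k.1 (fun j => w ⟨j.1, by have := j.isLt; have := k.isLt; omega⟩))


lemma bnd_texp {d : ℕ} {v : Fin d → ℝ} {c : ℝ} (h : ∀ j, |v j| ≤ c) :
    Bnd (texp v) (Efun c) := by
  intro n w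
  show |(∏ j, v (w j)) / (n.factorial : ℝ)| ≤ c ^ n / (n.factorial : ℝ)
  rw [abs_div, Nat.abs_cast]
  have h1 : |∏ j, v (w j)| ≤ c ^ n := by
    rw [Finset.abs_prod]
    calc ∏ j, |v (w j)| ≤ ∏ _j : Fin n, c :=
          Finset.prod_le_prod (fun i _ => abs_nonneg _) (fun i _ => h _)
      _ = c ^ n := by rw [Finset.prod_const, Finset.card_univ, Fintype.card_fin]
  exact (div_le_div_iff_of_pos_right (by positivity)).mpr h1

-- telescoping product bound
lemma abs_prod_sub_prod {ι : Type*} (s : Finset ι) (f g : ι → ℝ) {c δ : ℝ}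
    (hf : ∀ i ∈ s, |f i| ≤ c) (hg : ∀ i ∈ s, |g i| ≤ c)
    (hδ : ∀ i ∈ s, |f i - g i| ≤ δ) (hδ0 : 0 ≤ δ) :
    |∏ i ∈ s, f i - ∏ i ∈ s, g i| ≤ s.card * δ * c ^ (s.card - 1) := by
  induction s using Finset.cons_induction with
  | empty => simp
  | cons a s ha ih =>
    have hc0 : 0 ≤ c := le_trans (abs_nonneg _) (hf a (Finset.mem_cons_self a s))
    have hfs : ∀ i ∈ s, |f i| ≤ c := fun i hi => hf i (Finset.mem_cons_of_mem hi)
    have hgs : ∀ i ∈ s, |g i| ≤ c := fun i hi => hg i (Finset.mem_cons_of_mem hi)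
    have hδs : ∀ i ∈ s, |f i - g i| ≤ δ := fun i hi => hδ i (Finset.mem_cons_of_mem hi)
    have ih' := ih hfs hgs hδs
    rw [Finset.prod_cons, Finset.prod_cons, Finset.card_cons]
    have key : f a * ∏ i ∈ s, f i - g a * ∏ i ∈ s, g i
        = f a * (∏ i ∈ s, f i - ∏ i ∈ s, g i) + (f a - g a) * ∏ i ∈ s, g i := by ring
    rw [key]
    have hga : |∏ i ∈ s, g i| ≤ c ^ s.card := by
      rw [Finset.abs_prod]
      calc ∏ i ∈ s, |g i| ≤ ∏ i ∈ s, c :=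
            Finset.prod_le_prod (fun i _ => abs_nonneg _) hgs
        _ = c ^ s.card := Finset.prod_const c
    calc |f a * (∏ i ∈ s, f i - ∏ i ∈ s, g i) + (f a - g a) * ∏ i ∈ s, g i|
        ≤ |f a| * |∏ i ∈ s, f i - ∏ i ∈ s, g i| + |f a - g a| * |∏ i ∈ s, g i| := by
          refine le_trans (abs_add_le _ _) ?_
          rw [abs_mul, abs_mul]
      _ ≤ c * (s.card * δ * c ^ (s.card - 1)) + δ * c ^ s.card := by
          refine add_le_add ?_ ?_
          · exact mul_le_mul (hf a (Finset.mem_cons_self a s)) ih' (abs_nonneg _) hc0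
          · exact mul_le_mul (hδ a (Finset.mem_cons_self a s)) hga (abs_nonneg _) hδ0
      _ ≤ s.card * δ * c ^ s.card + δ * c ^ s.card := by
          refine add_le_add ?_ le_rfl
          rcases Nat.eq_zero_or_pos s.card with h0 | h0
          · simp [h0]
          · have : c * (↑s.card * δ * c ^ (s.card - 1)) = ↑s.card * δ * (c * c ^ (s.card - 1)) := by
              ring
            rw [this, ← pow_succ']
            have : s.card - 1 + 1 = s.card := by omega
            rw [this]
      _ = (↑s.card + 1) * δ * c ^ s.card := by push_cast; ring
      _ = ↑(s.card + 1) * δ * c ^ (s.card + 1 - 1) := by push_cast; simp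

lemma bnd_texp_sub {d : ℕ} {v u : Fin d → ℝ} {c δ : ℝ}
    (hv : ∀ j, |v j| ≤ c) (hu : ∀ j, |u j| ≤ c)
    (hδ : ∀ j, |v j - u j| ≤ δ) (hδ0 : 0 ≤ δ) :
    Bnd (fun n w => texp v n w - texp u n w) (fun n => δ * Dfun c n) := by
  intro n w
  show |(∏ j, v (w j)) / (n.factorial : ℝ) - (∏ j, u (w j)) / (n.factorial : ℝ)|
      ≤ δ * Dfun c n
  rw [div_sub_div_same, abs_div, Nat.abs_cast]
  have key := abs_prod_sub_prod (Finset.univ : Finset (Fin n)) (fun j => v (w j))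
    (fun j => u (w j)) (fun i _ => hv _) (fun i _ => hu _) (fun i _ => hδ _) hδ0
  rw [Finset.card_univ, Fintype.card_fin] at key
  rcases Nat.eq_zero_or_pos n with h0 | h0
  · subst h0
    simp only [Dfun, if_pos rfl, mul_zero]
    simpa using key
  · have hn : ¬ n = 0 := by omega
    have hfacpos : (0 : ℝ) < (n.factorial : ℝ) := by positivity
    have hfac : (n.factorial : ℝ) = (n : ℝ) * ((n - 1).factorial : ℝ) := by
      rw [← Nat.mul_factorial_pred hn]; push_cast; ring
    calc |∏ j, v (w j) - ∏ j, u (w j)| / (n.factorial : ℝ)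
        ≤ ((n : ℝ) * δ * c ^ (n - 1)) / (n.factorial : ℝ) :=
          (div_le_div_iff_of_pos_right hfacpos).mpr key
      _ = δ * Dfun c n := by
          rw [Dfun, if_neg hn, hfac]
          have hn0 : (n : ℝ) ≠ 0 := by positivity
          have hf0 : ((n - 1).factorial : ℝ) ≠ 0 := by positivity
          field_simp


lemma E_conv_E (c c' : ℝ) (n : ℕ) :
    ∑ k ∈ Finset.range (n + 1), Efun c k * Efun c' (n - k) = Efun (c + c') n := by
  unfold Efun
  have hfac : ∀ k ∈ Finset.range (n + 1),
      c ^ k / (k.factorial : ℝ) * (c' ^ (n - k) / ((n - k).factorial : ℝ))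
        = (n.choose k : ℝ) * (c ^ k * c' ^ (n - k)) / (n.factorial : ℝ) := by
    intro k hk
    have hkn : k ≤ n := by
      have := Finset.mem_range.mp hk; omega
    have hch : (n.choose k : ℝ) * (k.factorial : ℝ) * ((n - k).factorial : ℝ)
        = (n.factorial : ℝ) := by
      rw [← Nat.cast_mul, ← Nat.cast_mul, Nat.choose_mul_factorial_mul_factorial hkn]
    have h1 : (k.factorial : ℝ) ≠ 0 := by positivity
    have h2 : ((n - k).factorial : ℝ) ≠ 0 := by positivity
    have h3 : (n.factorial : ℝ) ≠ 0 := by positivity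
    field_simp
    rw [← hch]
    ring
  rw [Finset.sum_congr rfl hfac, ← Finset.sum_div]
  congr 1
  rw [add_pow]
  exact Finset.sum_congr rfl fun k _ => by ring


lemma E_conv_D (c c' : ℝ) (n : ℕ) :
    ∑ k ∈ Finset.range (n + 1), Efun c k * Dfun c' (n - k) = Dfun (c + c') n := by
  cases n with
  | zero => simp [Dfun, Efun]
  | succ m =>
    rw [Finset.sum_range_succ]
    have h1 : Dfun c' (m + 1 - (m + 1)) = 0 := by simp [Dfun]
    rw [h1, mul_zero, add_zero]
    have h2 : ∀ k ∈ Finset.range (m + 1), Efun c k * Dfun c' (m + 1 - k)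
        = Efun c k * Efun c' (m - k) := by
      intro k hk
      have hkm : k ≤ m := by have := Finset.mem_range.mp hk; omega
      have : Dfun c' (m + 1 - k) = Efun c' (m - k) := by
        have hne : ¬ (m + 1 - k = 0) := by omega
        rw [Dfun, if_neg hne]
        have : m + 1 - k - 1 = m - k := by omega
        rw [this, Efun]
      rw [this]
    rw [Finset.sum_congr rfl h2, E_conv_E]
    rw [Dfun, if_neg (by omega : ¬ (m + 1 = 0))]
    simp [Efun]

lemma D_conv_E (c c' : ℝ) (n : ℕ) :
    ∑ k ∈ Finset.range (n + 1), Dfun c k * Efun c' (n - k) = Dfun (c + c') n := by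
  cases n with
  | zero => simp [Dfun, Efun]
  | succ m =>
    rw [Finset.sum_range_succ']
    have h1 : Dfun c 0 = 0 := by simp [Dfun]
    rw [h1, zero_mul, add_zero]
    have h2 : ∀ k ∈ Finset.range (m + 1), Dfun c (k + 1) * Efun c' (m + 1 - (k + 1))
        = Efun c k * Efun c' (m - k) := by
      intro k hk
      have : Dfun c (k + 1) = Efun c k := by
        rw [Dfun, if_neg (by omega : ¬ (k + 1 = 0))]
        simp [Efun]
      rw [this]
      congr 2
      omega
    rw [Finset.sum_congr rfl h2, E_conv_E]
    rw [Dfun, if_neg (by omega : ¬ (m + 1 = 0))]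
    simp [Efun]


noncomputable def sigList (d' : ℕ) (F : ℕ → Fin d' → ℝ) (L : List ℕ) : TSeq d' :=
  L.foldr (fun i acc => tmul (texp (F i)) acc) (tone d')

lemma bnd_tone (d' : ℕ) : Bnd (tone d') (Efun 0) := by
  intro n w
  unfold tone Efun
  cases n with
  | zero => simp
  | succ m => simp

lemma tmul_sub {d' : ℕ} (a b A B : TSeq d') (n : ℕ) (w : Fin n → Fin d') :
    tmul a A n w - tmul b B n w
      = tmul (fun m u => a m u - b m u) B n w + tmul a (fun m u => A m u - B m u) n w := by
  unfold tmul
  rw [← Finset.sum_add_distrib, ← Finset.sum_sub_distrib]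
  exact Finset.sum_congr rfl fun k _ => by ring

lemma bnd_sigList {d' : ℕ} (F : ℕ → Fin d' → ℝ) (c : ℕ → ℝ)
    (hF : ∀ i j, |F i j| ≤ c i) :
    ∀ L : List ℕ, Bnd (sigList d' F L) (Efun ((L.map c).sum)) := by
  intro L
  induction L with
  | nil => simpa [sigList] using bnd_tone d'
  | cons a L ih =>
    have h1 : Bnd (sigList d' F (a :: L)) (fun n =>
        ∑ k ∈ Finset.range (n + 1), Efun (c a) k * Efun ((L.map c).sum) (n - k)) :=
      bnd_tmul (bnd_texp (hF a)) ih
    refine h1.mono fun n => ?_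
    rw [E_conv_E]
    simp

lemma bnd_sigList_sub {d' : ℕ} (F G : ℕ → Fin d' → ℝ) (c δ : ℕ → ℝ)
    (hF : ∀ i j, |F i j| ≤ c i) (hG : ∀ i j, |G i j| ≤ c i)
    (hδ : ∀ i j, |F i j - G i j| ≤ δ i)
    (hc0 : ∀ i, 0 ≤ c i) (hδ0 : ∀ i, 0 ≤ δ i) :
    ∀ L : List ℕ, Bnd (fun n w => sigList d' F L n w - sigList d' G L n w)
      (fun n => (L.map δ).sum * Dfun (2 * (L.map c).sum) n) := by
  intro L
  induction L with
  | nil =>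
    intro n w
    simp [sigList]
  | cons a L ih =>
    intro n w
    show |sigList d' F (a :: L) n w - sigList d' G (a :: L) n w| ≤ _
    have hsplit : sigList d' F (a :: L) n w - sigList d' G (a :: L) n w
        = tmul (fun m u => texp (F a) m u - texp (G a) m u) (sigList d' G L) n w
          + tmul (texp (F a)) (fun m u => sigList d' F L m u - sigList d' G L m u) n w := by
      exact tmul_sub (texp (F a)) (texp (G a)) (sigList d' F L) (sigList d' G L) n w
    rw [hsplit]
    have hcL0 : 0 ≤ (L.map c).sum := by
      refine List.sum_nonneg ?_
      intro x hx
      obtain ⟨i, _, rfl⟩ := List.mem_map.mp hx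
      exact hc0 i
    have hδL0 : 0 ≤ (L.map δ).sum := by
      refine List.sum_nonneg ?_
      intro x hx
      obtain ⟨i, _, rfl⟩ := List.mem_map.mp hx
      exact hδ0 i
    have hb1 : Bnd (tmul (fun m u => texp (F a) m u - texp (G a) m u) (sigList d' G L))
        (fun n => ∑ k ∈ Finset.range (n + 1),
          (δ a * Dfun (c a) k) * Efun ((L.map c).sum) (n - k)) :=
      bnd_tmul (bnd_texp_sub (hF a) (hG a) (hδ a) (hδ0 a)) (bnd_sigList G c hG L)
    have hb2 : Bnd (tmul (texp (F a)) (fun m u => sigList d' F L m u - sigList d' G L m u))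
        (fun n => ∑ k ∈ Finset.range (n + 1),
          Efun (c a) k * ((L.map δ).sum * Dfun (2 * (L.map c).sum) (n - k))) :=
      bnd_tmul (bnd_texp (hF a)) ih
    have e1 : ∀ n, (∑ k ∈ Finset.range (n + 1),
          (δ a * Dfun (c a) k) * Efun ((L.map c).sum) (n - k))
        = δ a * Dfun (c a + (L.map c).sum) n := by
      intro m
      rw [← D_conv_E (c a) ((L.map c).sum) m, Finset.mul_sum]
      exact Finset.sum_congr rfl fun k _ => by ring
    have e2 : ∀ n, (∑ k ∈ Finset.range (n + 1),
          Efun (c a) k * ((L.map δ).sum * Dfun (2 * (L.map c).sum) (n - k)))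
        = (L.map δ).sum * Dfun (c a + 2 * (L.map c).sum) n := by
      intro m
      rw [← E_conv_D (c a) (2 * (L.map c).sum) m, Finset.mul_sum]
      exact Finset.sum_congr rfl fun k _ => by ring
    have hC : 2 * ((a :: L).map c).sum = 2 * (c a + (L.map c).sum) := by simp
    calc |tmul (fun m u => texp (F a) m u - texp (G a) m u) (sigList d' G L) n w
          + tmul (texp (F a)) (fun m u => sigList d' F L m u - sigList d' G L m u) n w|
        ≤ δ a * Dfun (c a + (L.map c).sum) n
          + (L.map δ).sum * Dfun (c a + 2 * (L.map c).sum) n := by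
          refine le_trans (abs_add_le _ _) (add_le_add ?_ ?_)
          · exact le_of_le_of_eq (hb1 n w) (e1 n)
          · exact le_of_le_of_eq (hb2 n w) (e2 n)
      _ ≤ δ a * Dfun (2 * (c a + (L.map c).sum)) n
          + (L.map δ).sum * Dfun (2 * (c a + (L.map c).sum)) n := by
          refine add_le_add ?_ ?_
          · refine mul_le_mul_of_nonneg_left ?_ (hδ0 a)
            exact Dfun_mono (by linarith [hc0 a]) (by linarith [hc0 a]) n
          · refine mul_le_mul_of_nonneg_left ?_ hδL0
            exact Dfun_mono (by linarith [hc0 a]) (by linarith [hc0 a]) n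
      _ = ((a :: L).map δ).sum * Dfun (2 * ((a :: L).map c).sum) n := by
          rw [hC]
          simp
          ring


lemma list_range_map_sum (f : ℕ → ℝ) (n : ℕ) :
    ((List.range n).map f).sum = ∑ i ∈ Finset.range n, f i := by
  induction n with
  | zero => simp
  | succ m ih => rw [List.range_succ, Finset.sum_range_succ]; simp [ih]

lemma coord_abs_le {d : ℕ} (a : EuclideanSpace ℝ (Fin d)) (j : Fin d) : |a j| ≤ ‖a‖ := by
  rw [EuclideanSpace.norm_eq, ← Real.sqrt_sq_eq_abs]
  apply Real.sqrt_le_sqrt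
  have h : a j ^ 2 = ‖a j‖ ^ 2 := by rw [Real.norm_eq_abs, sq_abs]
  rw [h]
  exact Finset.single_le_sum (f := fun i => ‖a i‖ ^ 2) (fun i _ => sq_nonneg _)
    (Finset.mem_univ j)

end S9Aux

open S9Aux in
theorem statement9 {d N : ℕ} (t : ℕ → ℝ) (ht0 : t 0 = 0)
    (hmono : ∀ i < N, t i < t (i + 1)) :
    ∀ M > (0 : ℝ), ∃ C : ℝ,
      ∀ x y : ℕ → EuclideanSpace ℝ (Fin d),
        oneVar N x ≤ M → oneVar N y ≤ M →
        tseqNorm (fun n w =>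
            sig d N t (fun i j => x i j) n w - sig d N t (fun i j => y i j) n w)
          ≤ C * oneVar N (fun i => x i - y i) := by
  intro M hM
  obtain ⟨A, hA⟩ : ∃ A : ℝ, A = 2 * (t N + 2 * M) := ⟨_, rfl⟩
  refine ⟨Real.sqrt (∑' n : ℕ, ((d : ℝ) + 1) ^ n * (Dfun A n) ^ 2), ?_⟩
  intro x y hx hy
  -- increments
  set F : ℕ → Fin (d + 1) → ℝ := fun i =>
    Fin.cons (t i - (if i = 0 then 0 else t (i - 1)))
      (fun j => x i j - (if i = 0 then 0 else x (i - 1) j)) with hF'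
  set G : ℕ → Fin (d + 1) → ℝ := fun i =>
    Fin.cons (t i - (if i = 0 then 0 else t (i - 1)))
      (fun j => y i j - (if i = 0 then 0 else y (i - 1) j)) with hG'
  set c : ℕ → ℝ := fun i =>
    |t i - (if i = 0 then 0 else t (i - 1))|
      + ‖x i - (if i = 0 then 0 else x (i - 1))‖
      + ‖y i - (if i = 0 then 0 else y (i - 1))‖ with hc'
  set δ : ℕ → ℝ := fun i =>
    ‖(x i - y i) - (if i = 0 then 0 else x (i - 1) - y (i - 1))‖ with hδ'
  have hxco : ∀ i (j : Fin d), |x i j - (if i = 0 then 0 else x (i - 1) j)|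
      ≤ ‖x i - (if i = 0 then 0 else x (i - 1))‖ := by
    intro i j
    have h := coord_abs_le (x i - (if i = 0 then 0 else x (i - 1))) j
    have he : (x i - (if i = 0 then 0 else x (i - 1))) j
        = x i j - (if i = 0 then 0 else x (i - 1) j) := by
      by_cases h0 : i = 0 <;> simp [h0]
    rwa [he] at h
  have hyco : ∀ i (j : Fin d), |y i j - (if i = 0 then 0 else y (i - 1) j)|
      ≤ ‖y i - (if i = 0 then 0 else y (i - 1))‖ := by
    intro i j
    have h := coord_abs_le (y i - (if i = 0 then 0 else y (i - 1))) j
    have he : (y i - (if i = 0 then 0 else y (i - 1))) j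
        = y i j - (if i = 0 then 0 else y (i - 1) j) := by
      by_cases h0 : i = 0 <;> simp [h0]
    rwa [he] at h
  have hFb : ∀ i j, |F i j| ≤ c i := by
    intro i j
    refine Fin.cases ?_ ?_ j
    · simp only [hF', Fin.cons_zero, hc']
      have := norm_nonneg (x i - (if i = 0 then 0 else x (i - 1)))
      have := norm_nonneg (y i - (if i = 0 then 0 else y (i - 1)))
      linarith [le_refl |t i - (if i = 0 then 0 else t (i - 1))|]
    · intro j'
      simp only [hF', Fin.cons_succ, hc']
      have h1 := hxco i j'
      have := abs_nonneg (t i - (if i = 0 then 0 else t (i - 1)))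
      have := norm_nonneg (y i - (if i = 0 then 0 else y (i - 1)))
      linarith
  have hGb : ∀ i j, |G i j| ≤ c i := by
    intro i j
    refine Fin.cases ?_ ?_ j
    · simp only [hG', Fin.cons_zero, hc']
      have := norm_nonneg (x i - (if i = 0 then 0 else x (i - 1)))
      have := norm_nonneg (y i - (if i = 0 then 0 else y (i - 1)))
      linarith [le_refl |t i - (if i = 0 then 0 else t (i - 1))|]
    · intro j'
      simp only [hG', Fin.cons_succ, hc']
      have h1 := hyco i j'
      have := abs_nonneg (t i - (if i = 0 then 0 else t (i - 1)))
      have := norm_nonneg (x i - (if i = 0 then 0 else x (i - 1)))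
      linarith
  have hδb : ∀ i j, |F i j - G i j| ≤ δ i := by
    intro i j
    refine Fin.cases ?_ ?_ j
    · simp only [hF', hG', Fin.cons_zero, hδ']
      simp
    · intro j'
      simp only [hF', hG', Fin.cons_succ, hδ']
      have h := coord_abs_le ((x i - y i) - (if i = 0 then 0 else x (i - 1) - y (i - 1))) j'
      have he : ((x i - y i) - (if i = 0 then 0 else x (i - 1) - y (i - 1))) j'
          = (x i j' - (if i = 0 then 0 else x (i - 1) j'))
            - (y i j' - (if i = 0 then 0 else y (i - 1) j')) := by
        by_cases h0 : i = 0 <;> simp [h0] <;> ring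
      rwa [he] at h
  have hc0 : ∀ i, 0 ≤ c i := by
    intro i
    simp only [hc']
    positivity
  have hδ0 : ∀ i, 0 ≤ δ i := fun i => norm_nonneg _
  have hbnd := bnd_sigList_sub F G c δ hFb hGb hδb hc0 hδ0 (List.range (N + 1))
  -- identify list sums
  rw [list_range_map_sum δ (N + 1), list_range_map_sum c (N + 1)] at hbnd
  have hδtot : (∑ i ∈ Finset.range (N + 1), δ i) = oneVar N (fun i => x i - y i) := by
    unfold oneVar
    refine Finset.sum_congr rfl fun i _ => ?_
    by_cases h0 : i = 0 <;> simp [hδ', h0]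
  -- time increments sum
  have htimes : (∑ i ∈ Finset.range (N + 1),
      |t i - (if i = 0 then 0 else t (i - 1))|) = t N := by
    have habs : ∀ i ∈ Finset.range (N + 1),
        |t i - (if i = 0 then 0 else t (i - 1))| = t i - (if i = 0 then 0 else t (i - 1)) := by
      intro i hi
      rcases Nat.eq_zero_or_pos i with h0 | h0
      · subst h0; simp [ht0]
      · have hiN : i ≤ N := by have := Finset.mem_range.mp hi; omega
        have hlt : t (i - 1) < t i := by
          have := hmono (i - 1) (by omega)
          rwa [Nat.sub_add_cancel (by omega)] at this
        rw [if_neg (by omega)]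
        exact abs_of_nonneg (by linarith)
    rw [Finset.sum_congr rfl habs, Finset.sum_range_succ']
    simp only [Nat.add_sub_cancel, if_neg (Nat.succ_ne_zero _), ht0]
    rw [Finset.sum_range_sub (fun i => t i)]
    simp [ht0]
  have hcsum : (∑ i ∈ Finset.range (N + 1), c i) ≤ t N + 2 * M := by
    have : (∑ i ∈ Finset.range (N + 1), c i)
        = (∑ i ∈ Finset.range (N + 1), |t i - (if i = 0 then 0 else t (i - 1))|)
          + oneVar N x + oneVar N y := by
      unfold oneVar
      rw [← Finset.sum_add_distrib, ← Finset.sum_add_distrib]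
    rw [this, htimes]
    linarith
  have hcsum0 : 0 ≤ (∑ i ∈ Finset.range (N + 1), c i) :=
    Finset.sum_nonneg fun i _ => hc0 i
  -- final Bnd
  set δtot : ℝ := oneVar N (fun i => x i - y i) with hδt
  have hδtot0 : 0 ≤ δtot := Finset.sum_nonneg fun i _ => norm_nonneg _
  have hbnd2 : ∀ n w, |sig d N t (fun i j => x i j) n w - sig d N t (fun i j => y i j) n w|
      ≤ δtot * Dfun A n := by
    intro n w
    have h := hbnd n w
    rw [hδtot] at h
    refine le_trans h ?_
    refine mul_le_mul_of_nonneg_left ?_ hδtot0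
    exact Dfun_mono (by linarith) (by rw [hA]; linarith) n
  -- summability of the majorant
  have hgsum : Summable (fun n : ℕ => ((d : ℝ) + 1) ^ n * (Dfun A n) ^ 2) := by
    rw [← summable_nat_add_iff 1]
    refine Summable.of_nonneg_of_le (fun n => by positivity) ?_
      ((Real.summable_pow_div_factorial (((d : ℝ) + 1) * A ^ 2)).mul_left ((d : ℝ) + 1))
    intro n
    have hD : Dfun A (n + 1) = A ^ n / (n.factorial : ℝ) := by
      rw [Dfun, if_neg (Nat.succ_ne_zero n)]; simp
    rw [hD]
    have hfac1 : (1 : ℝ) ≤ (n.factorial : ℝ) := by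
      exact_mod_cast Nat.one_le_iff_ne_zero.mpr (Nat.factorial_ne_zero n)
    have hfacpos : (0 : ℝ) < (n.factorial : ℝ) := by positivity
    calc ((d : ℝ) + 1) ^ (n + 1) * (A ^ n / (n.factorial : ℝ)) ^ 2
        = (((d : ℝ) + 1) * (((d : ℝ) + 1) * A ^ 2) ^ n) / ((n.factorial : ℝ)) ^ 2 := by
          rw [div_pow, mul_pow]
          field_simp
          ring
      _ ≤ (((d : ℝ) + 1) * (((d : ℝ) + 1) * A ^ 2) ^ n) / (n.factorial : ℝ) := by
          refine div_le_div_of_nonneg_left (by positivity) hfacpos ?_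
          nlinarith
      _ = ((d : ℝ) + 1) * ((((d : ℝ) + 1) * A ^ 2) ^ n / (n.factorial : ℝ)) := by ring
  have hpt : ∀ n : ℕ, (∑ w : Fin n → Fin (d + 1),
        (sig d N t (fun i j => x i j) n w - sig d N t (fun i j => y i j) n w) ^ 2)
      ≤ δtot ^ 2 * (((d : ℝ) + 1) ^ n * (Dfun A n) ^ 2) := by
    intro n
    calc (∑ w : Fin n → Fin (d + 1),
          (sig d N t (fun i j => x i j) n w - sig d N t (fun i j => y i j) n w) ^ 2)
        ≤ ∑ _w : Fin n → Fin (d + 1), (δtot * Dfun A n) ^ 2 := by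
          refine Finset.sum_le_sum fun w _ => ?_
          have h := hbnd2 n w
          calc (sig d N t (fun i j => x i j) n w - sig d N t (fun i j => y i j) n w) ^ 2
              = |sig d N t (fun i j => x i j) n w - sig d N t (fun i j => y i j) n w| ^ 2 :=
                (sq_abs _).symm
            _ ≤ (δtot * Dfun A n) ^ 2 := pow_le_pow_left₀ (abs_nonneg _) h 2
      _ = (Fintype.card (Fin n → Fin (d + 1)) : ℝ) * (δtot * Dfun A n) ^ 2 := by
          rw [Finset.sum_const, Finset.card_univ, nsmul_eq_mul]
      _ = δtot ^ 2 * (((d : ℝ) + 1) ^ n * (Dfun A n) ^ 2) := by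
          rw [Fintype.card_fun, Fintype.card_fin, Fintype.card_fin]
          push_cast
          ring
  have hsmall : Summable (fun n : ℕ => ∑ w : Fin n → Fin (d + 1),
      (sig d N t (fun i j => x i j) n w - sig d N t (fun i j => y i j) n w) ^ 2) :=
    Summable.of_nonneg_of_le (fun n => Finset.sum_nonneg fun w _ => sq_nonneg _) hpt
      (hgsum.mul_left (δtot ^ 2))
  show Real.sqrt _ ≤ _
  calc Real.sqrt (∑' n : ℕ, ∑ w : Fin n → Fin (d + 1),
        (sig d N t (fun i j => x i j) n w - sig d N t (fun i j => y i j) n w) ^ 2)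
      ≤ Real.sqrt (∑' n : ℕ, δtot ^ 2 * (((d : ℝ) + 1) ^ n * (Dfun A n) ^ 2)) :=
        Real.sqrt_le_sqrt (Summable.tsum_le_tsum hpt hsmall (hgsum.mul_left _))
    _ = Real.sqrt (δtot ^ 2 * ∑' n : ℕ, ((d : ℝ) + 1) ^ n * (Dfun A n) ^ 2) := by
        rw [tsum_mul_left]
    _ = δtot * Real.sqrt (∑' n : ℕ, ((d : ℝ) + 1) ^ n * (Dfun A n) ^ 2) := by
        rw [Real.sqrt_mul (sq_nonneg _), Real.sqrt_sq hδtot0]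
    _ = Real.sqrt (∑' n : ℕ, ((d : ℝ) + 1) ^ n * (Dfun A n) ^ 2) * δtot := mul_comm _ _
end

section
/- There exists a sequence of filtered processes (Xⁿ) converging weakly (in law) to a filtered process X such that the optimal stopping value functions do not converge: v(Xⁿ) does not converge to v(X), where v(X) = sup over stopping times τ of E[γ(X_τ)] for some bounded continuous γ. Concretely: on the 3-step grid {0,1,2}, let Xⁿ start at 0, jump at time 1 to ±1/n with probability 1/2 each, then move deterministically to +1 (if +1/n) or −1 (if −1/n); and let X stay at 0 until time 1 and then jump to ±1 with probability 1/2. Then the laws of Xⁿ converge weakly to the law of X, yet with γ(x) = x (truncated to [−1,1]), sup_τ E[γ(Xⁿ_τ)] = 1 − 1/n → 1 while sup_τ E[γ(X_τ)] = 0 (in the natural filtration of X, no stopping time can anticipate the final jump). -/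
open MeasureTheory Filter

/-- The fair-coin probability measure on `Bool`. -/
noncomputable def coin : Measure Bool :=
  (2 : ENNReal)⁻¹ • Measure.dirac true + (2 : ENNReal)⁻¹ • Measure.dirac false

/-- The natural filtration at time `t` of a three-step process `Z`. -/
def natFilt (Z : Bool → Fin 3 → ℝ) (t : Fin 3) : MeasurableSpace Bool :=
  ⨆ (s : Fin 3) (_ : s ≤ t), MeasurableSpace.comap (fun b => Z b s) inferInstance

/-- `τ` is a stopping time for the natural filtration of `Z`. -/
def IsStopTime (Z : Bool → Fin 3 → ℝ) (τ : Bool → Fin 3) : Prop :=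
  ∀ t : Fin 3, MeasurableSet[natFilt Z t] {b | τ b ≤ t}

/-- Optimal stopping value `v(Z) = sup_τ E[γ(Z_τ)]`, the supremum running over
stopping times for the natural filtration of `Z`. -/
noncomputable def value (Z : Bool → Fin 3 → ℝ) (γ : ℝ → ℝ) : ℝ :=
  sSup {r | ∃ τ, IsStopTime Z τ ∧ r = ∫ b, γ (Z b (τ b)) ∂coin}

/- ============ auxiliary material ============ -/

lemma st12_fin_aux (b : Bool) : IsFiniteMeasure ((2 : ENNReal)⁻¹ • Measure.dirac b) :=
  ⟨by simp⟩

lemma coin_int (g : Bool → ℝ) : ∫ b, g b ∂coin = (g true + g false) / 2 := by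
  have := st12_fin_aux true
  have := st12_fin_aux false
  have h1 : Integrable g ((2 : ENNReal)⁻¹ • Measure.dirac true) := .of_finite
  have h2 : Integrable g ((2 : ENNReal)⁻¹ • Measure.dirac false) := .of_finite
  rw [coin, integral_add_measure h1 h2, integral_smul_measure, integral_smul_measure,
    integral_dirac, integral_dirac]
  simp [ENNReal.toReal_inv]
  ring

/-- the limit process -/
noncomputable def st12X (b : Bool) : Fin 3 → ℝ := ![0, 0, if b then 1 else -1]

/-- the approximating processes -/
noncomputable def st12Xn (n : ℕ) (b : Bool) : Fin 3 → ℝ :=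
  ![0, (if b then 1 else -1) / (n + 1), if b then 1 else -1]

/-- truncated identity payoff -/
noncomputable def st12gam (r : ℝ) : ℝ := max (-1) (min 1 r)

lemma st12gam_eval (r : ℝ) (h1 : -1 ≤ r) (h2 : r ≤ 1) : st12gam r = r := by
  simp [st12gam, min_eq_right h2, max_eq_right h1]

lemma st12Xn_eval0 (n : ℕ) (b : Bool) : st12Xn n b 0 = 0 := rfl
lemma st12Xn_eval1 (n : ℕ) (b : Bool) :
    st12Xn n b 1 = (if b then 1 else -1) / (n + 1) := rfl
lemma st12Xn_eval2 (n : ℕ) (b : Bool) : st12Xn n b 2 = if b then 1 else -1 := rfl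
lemma st12X_eval0 (b : Bool) : st12X b 0 = 0 := rfl
lemma st12X_eval1 (b : Bool) : st12X b 1 = 0 := rfl
lemma st12X_eval2 (b : Bool) : st12X b 2 = if b then 1 else -1 := rfl

lemma st12X_le_one (b : Bool) (s : Fin 3) (hs : s ≤ 1) : st12X b s = 0 := by
  fin_cases s
  · exact st12X_eval0 b
  · exact st12X_eval1 b
  · exact absurd hs (by decide)

lemma st12_natFilt_bot : natFilt st12X 1 = ⊥ := by
  refine le_antisymm ?_ bot_le
  refine iSup_le fun s => iSup_le fun hs => ?_
  have : (fun b => st12X b s) = fun _ => 0 := funext fun b => st12X_le_one b s hs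
  rw [this, MeasurableSpace.comap_const]

lemma st12_tau2 (t : Fin 3) (ht : ¬ t ≤ 1) : t = 2 := by
  have h3 := t.isLt
  rw [Fin.le_def] at ht
  apply Fin.ext
  simp only [Fin.val_one] at ht
  omega

lemma st12_valueX : value st12X st12gam = 0 := by
  have hset : {r | ∃ τ, IsStopTime st12X τ ∧ r = ∫ b, st12gam (st12X b (τ b)) ∂coin}
      = {0} := by
    ext r
    simp only [Set.mem_setOf_eq, Set.mem_singleton_iff]
    constructor
    · rintro ⟨τ, hτ, rfl⟩
      have h1 := hτ 1
      rw [st12_natFilt_bot, MeasurableSpace.measurableSet_bot_iff] at h1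
      rw [coin_int]
      rcases h1 with h1 | h1
      · have h2 : ∀ b, τ b = 2 := by
          intro b
          apply st12_tau2
          intro hle
          have hb : b ∈ ({b | τ b ≤ 1} : Set Bool) := hle
          rw [h1] at hb
          exact hb
        rw [h2 true, h2 false, st12X_eval2, st12X_eval2]
        simp only [if_true, Bool.false_eq_true, if_false]
        rw [st12gam_eval 1 (by norm_num) le_rfl, st12gam_eval (-1) le_rfl (by norm_num)]
        norm_num
      · have h2 : ∀ b, st12X b (τ b) = 0 := by
          intro b
          apply st12X_le_one
          have hb : b ∈ ({b | τ b ≤ 1} : Set Bool) := by rw [h1]; trivial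
          exact hb
        rw [h2 true, h2 false, st12gam_eval 0 (by norm_num) (by norm_num)]
        norm_num
    · rintro rfl
      refine ⟨fun _ => 0, fun t => ?_, ?_⟩
      · have h : {b : Bool | (0 : Fin 3) ≤ t} = Set.univ := by
          ext b; simp [Fin.zero_le]
        exact h ▸ MeasurableSet.univ
      · rw [coin_int, st12X_eval0, st12X_eval0,
          st12gam_eval 0 (by norm_num) (by norm_num)]
        norm_num
  rw [value, hset, csSup_singleton]

lemma st12_value_lb (n : ℕ) :
    (1 : ℝ)/2 - 1/(2*(n+1)) ≤ value (st12Xn n) st12gam := by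
  have hbdd : BddAbove {r | ∃ τ, IsStopTime (st12Xn n) τ ∧
      r = ∫ b, st12gam (st12Xn n b (τ b)) ∂coin} := by
    refine ⟨1, ?_⟩
    rintro r ⟨τ, hτ, rfl⟩
    rw [coin_int]
    have hle : ∀ b, st12gam (st12Xn n b (τ b)) ≤ 1 :=
      fun b => max_le (by norm_num) (min_le_left _ _)
    have := hle true
    have := hle false
    linarith
  apply le_csSup hbdd
  have hn1 : (0:ℝ) < (n:ℝ) + 1 := by positivity
  refine ⟨fun b => if b then 2 else 1, ?_, ?_⟩
  · intro t
    fin_cases t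
    · show MeasurableSet[natFilt (st12Xn n) 0] {b : Bool | (if b then (2:Fin 3) else 1) ≤ 0}
      have h : {b : Bool | (if b then (2:Fin 3) else 1) ≤ 0} = ∅ := by
        ext b; cases b <;> simp <;> decide
      exact h ▸ @MeasurableSet.empty Bool (natFilt (st12Xn n) 0)
    · show MeasurableSet[natFilt (st12Xn n) 1] {b : Bool | (if b then (2:Fin 3) else 1) ≤ 1}
      have hle : MeasurableSpace.comap (fun b => st12Xn n b 1) inferInstance
          ≤ natFilt (st12Xn n) 1 := by
        refine le_trans ?_ (le_iSup _ (1 : Fin 3))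
        exact le_iSup (fun (_ : (1:Fin 3) ≤ 1) => MeasurableSpace.comap
          (fun b => st12Xn n b 1) inferInstance) le_rfl
      apply hle
      refine ⟨Set.Iio 0, measurableSet_Iio, ?_⟩
      ext b
      simp only [Set.mem_preimage, Set.mem_Iio, Set.mem_setOf_eq]
      cases b
      · refine iff_of_true ?_ (by decide)
        rw [st12Xn_eval1]
        simp only [Bool.false_eq_true, if_false, neg_div]
        have : (0:ℝ) < 1/((n:ℝ)+1) := by positivity
        linarith
      · refine iff_of_false ?_ (by decide)
        rw [st12Xn_eval1]
        simp only [if_true]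
        intro h
        have : (0:ℝ) < 1/((n:ℝ)+1) := by positivity
        linarith
    · show MeasurableSet[natFilt (st12Xn n) 2] {b : Bool | (if b then (2:Fin 3) else 1) ≤ 2}
      have h : {b : Bool | (if b then (2:Fin 3) else 1) ≤ 2} = Set.univ := by
        ext b; cases b <;> simp <;> decide
      exact h ▸ @MeasurableSet.univ Bool (natFilt (st12Xn n) 2)
  · rw [coin_int]
    show (1:ℝ)/2 - 1/(2*((n:ℝ)+1)) = (st12gam (st12Xn n true 2) + st12gam (st12Xn n false 1)) / 2
    rw [st12Xn_eval2, st12Xn_eval1]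
    simp only [if_true, Bool.false_eq_true, if_false]
    have h1n : (1:ℝ)/((n:ℝ)+1) ≤ 1 := by
      rw [div_le_one hn1]; linarith [Nat.cast_nonneg (α := ℝ) n]
    rw [st12gam_eval 1 (by norm_num) le_rfl,
      st12gam_eval ((-1)/((n:ℝ)+1)) (by rw [neg_div]; linarith) (by rw [neg_div]; linarith [one_div_pos.mpr hn1])]
    field_simp
    ring

theorem statement12 :
    ∃ (Xn : ℕ → Bool → Fin 3 → ℝ) (X : Bool → Fin 3 → ℝ) (γ : ℝ → ℝ),
      Continuous γ ∧ (∃ C, ∀ r, |γ r| ≤ C) ∧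
      (∀ f : (Fin 3 → ℝ) → ℝ, Continuous f →
        Tendsto (fun n => ∫ b, f (Xn n b) ∂coin) atTop
          (nhds (∫ b, f (X b) ∂coin))) ∧
      value X γ = 0 ∧
      ¬ Tendsto (fun n => value (Xn n) γ) atTop (nhds (value X γ)) := by
  refine ⟨st12Xn, st12X, st12gam, ?_, ⟨1, fun r => ?_⟩, ?_, st12_valueX, ?_⟩
  · exact continuous_const.max (continuous_const.min continuous_id)
  · rw [abs_le]
    exact ⟨le_max_left _ _, max_le (by norm_num) (min_le_left _ _)⟩
  · -- weak convergence
    intro f hf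
    simp only [coin_int]
    have hlim : ∀ b : Bool, Tendsto (fun n => f (st12Xn n b)) atTop (nhds (f (st12X b))) := by
      intro b
      apply (hf.tendsto _).comp
      rw [tendsto_pi_nhds]
      intro s
      fin_cases s
      · show Tendsto (fun n => st12Xn n b 0) atTop (nhds (st12X b 0))
        simp only [st12Xn_eval0, st12X_eval0]
        exact tendsto_const_nhds
      · show Tendsto (fun n => st12Xn n b 1) atTop (nhds (st12X b 1))
        simp only [st12Xn_eval1, st12X_eval1]
        apply Tendsto.div_atTop (tendsto_const_nhds)
        exact tendsto_natCast_atTop_atTop.atTop_add tendsto_const_nhds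
      · show Tendsto (fun n => st12Xn n b 2) atTop (nhds (st12X b 2))
        simp only [st12Xn_eval2, st12X_eval2]
        exact tendsto_const_nhds
    exact ((hlim true).add (hlim false)).div_const 2
  · -- not tendsto
    rw [st12_valueX]
    intro h
    have hev := h.eventually_lt_const (show (0:ℝ) < 1/4 by norm_num)
    rw [eventually_atTop] at hev
    obtain ⟨N, hN⟩ := hev
    set m := max N 1 with hm
    have hc := hN m (le_max_left _ _)
    have hv' := st12_value_lb m
    have hm1 : (1:ℝ) ≤ (m:ℝ) := by
      exact_mod_cast le_max_right N 1
    have harith : (1:ℝ)/(2*((m:ℝ)+1)) ≤ 1/4 := by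
      rw [div_le_div_iff₀ (by linarith) (by norm_num)]
      linarith
    linarith
end

section
/- Let k be a continuous reproducing kernel on a compact metric space Z whose RKHS is dense in C(Z, ℝ) (k universal). Then the kernel mean embedding μ: P(Z) → H_k is injective, and the maximum mean discrepancy D(P, Q) := ‖μ(P) − μ(Q)‖_{H_k} metrizes the weak topology on P(Z): P_n → P weakly if and only if D(P_n, P) → 0. -/
open MeasureTheory Filter

/- STATEMENT 14: for a continuous universal kernel `k` on a compact metric
space `Z` (presented via a feature map `φ` with `k(x,y) = ⟨φ x, φ y⟩`; the RKHS
being dense in `C(Z,ℝ)` is expressed as uniform approximability by linear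
combinations of kernel sections), the kernel mean embedding
`μ(P) = ∫ φ dP` is injective on probability measures, and the MMD
`D(P,Q) = ‖μ(P) − μ(Q)‖` metrizes the weak topology: `P_n → P` weakly iff
`D(P_n, P) → 0`. -/
theorem statement14 {Z H : Type*} [MetricSpace Z] [CompactSpace Z]
    [MeasurableSpace Z] [BorelSpace Z]
    [NormedAddCommGroup H] [InnerProductSpace ℝ H] [CompleteSpace H]
    (k : Z → Z → ℝ) (φ : Z → H)
    (hk : Continuous fun p : Z × Z => k p.1 p.2)
    (hfeat : ∀ x y, k x y = (inner ℝ (φ x) (φ y) : ℝ))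
    (huniv : ∀ g : Z → ℝ, Continuous g → ∀ ε > (0 : ℝ),
      ∃ (n : ℕ) (c : Fin n → ℝ) (z : Fin n → Z),
        ∀ w : Z, |g w - ∑ i, c i * k (z i) w| ≤ ε) :
    (∀ P Q : Measure Z, IsProbabilityMeasure P → IsProbabilityMeasure Q →
      (∫ x, φ x ∂P) = (∫ x, φ x ∂Q) → P = Q) ∧
    (∀ (Pseq : ℕ → Measure Z) (P : Measure Z),
      (∀ n, IsProbabilityMeasure (Pseq n)) → IsProbabilityMeasure P →
      ((∀ g : Z → ℝ, Continuous g →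
          Tendsto (fun n => ∫ x, g x ∂(Pseq n)) atTop (nhds (∫ x, g x ∂P))) ↔
        Tendsto (fun n => ‖(∫ x, φ x ∂(Pseq n)) - ∫ x, φ x ∂P‖) atTop
          (nhds 0))) := by
  -- continuity of the feature map
  have hφc : Continuous φ := by
    rw [continuous_iff_continuousAt]
    intro x
    have hsq : ∀ y : Z, ‖φ y - φ x‖ ^ 2 = k y y - 2 * k y x + k x x := by
      intro y
      rw [norm_sub_sq_real, ← real_inner_self_eq_norm_sq, ← real_inner_self_eq_norm_sq,
        ← hfeat, ← hfeat, ← hfeat]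
    have h1 : Continuous fun y : Z => k y y :=
      hk.comp (continuous_id.prodMk continuous_id)
    have h2 : Continuous fun y : Z => k y x :=
      hk.comp (continuous_id.prodMk continuous_const)
    have hdiag : Continuous fun y : Z => k y y - 2 * k y x + k x x :=
      (h1.sub ((continuous_const (y := (2:ℝ))).mul h2)).add continuous_const
    have hlim : Tendsto (fun y => ‖φ y - φ x‖ ^ 2) (nhds x) (nhds 0) := by
      have h0 : (fun y : Z => ‖φ y - φ x‖ ^ 2) = fun y => k y y - 2 * k y x + k x x :=
        funext hsq
      rw [h0]
      have := hdiag.tendsto x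
      simpa using this.congr' (by simp) |>.mono_right (by
        have : k x x - 2 * k x x + k x x = 0 := by ring
        rw [this])
    have hlim' : Tendsto (fun y => ‖φ y - φ x‖) (nhds x) (nhds 0) := by
      have h := (Real.continuous_sqrt.tendsto 0).comp hlim
      have hfun : ((fun t => Real.sqrt t) ∘ fun y => ‖φ y - φ x‖ ^ 2)
          = fun y => ‖φ y - φ x‖ := by
        funext y
        simp [Function.comp, Real.sqrt_sq (norm_nonneg _)]
      rw [Function.comp_def] at h
      rw [Function.comp_def] at hfun
      rw [hfun] at h
      simpa using h
    rw [ContinuousAt, tendsto_iff_norm_sub_tendsto_zero]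
    exact hlim'
  -- integrability facts
  have hgint : ∀ (Q : Measure Z), IsFiniteMeasure Q → ∀ g : Z → ℝ, Continuous g →
      Integrable g Q := by
    intro Q hQ g hg
    exact hg.integrable_of_hasCompactSupport (HasCompactSupport.of_compactSpace g)
  have hφint : ∀ (Q : Measure Z), IsFiniteMeasure Q → Integrable φ Q := by
    intro Q hQ
    exact hφc.integrable_of_hasCompactSupport (HasCompactSupport.of_compactSpace φ)
  -- continuity of kernel sections
  have hksec : ∀ z : Z, Continuous fun w => k z w := fun z =>
    hk.comp (continuous_const.prodMk continuous_id)
  -- key identity: inner ℝ products with the mean embedding are section integrals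
  have hsec : ∀ (Q : Measure Z), IsFiniteMeasure Q → ∀ z : Z,
      (inner ℝ (φ z) (∫ x, φ x ∂Q) : ℝ) = ∫ w, k z w ∂Q := by
    intro Q hQ z
    rw [← integral_inner (hφint Q hQ) (φ z)]
    refine integral_congr_ae (Filter.Eventually.of_forall fun w => ?_)
    exact (hfeat z w).symm
  -- integral of a finite kernel combination equals an inner ℝ product
  have hfsum : ∀ (Q : Measure Z), IsFiniteMeasure Q → ∀ (n : ℕ) (c : Fin n → ℝ)
      (z : Fin n → Z),
      ∫ x, (∑ i, c i * k (z i) x) ∂Q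
        = (inner ℝ (∑ i, c i • φ (z i)) (∫ x, φ x ∂Q) : ℝ) := by
    intro Q hQ n c z
    rw [integral_finset_sum _ (fun i _ =>
      (hgint Q hQ (fun x => c i * k (z i) x) (continuous_const.mul (hksec (z i)))))]
    rw [sum_inner]
    refine Finset.sum_congr rfl fun i _ => ?_
    rw [real_inner_smul_left, hsec Q hQ (z i), integral_const_mul]
  -- bound: integrals against probability measures of uniformly close functions
  have hb : ∀ (R : Measure Z), IsProbabilityMeasure R → ∀ (g f : Z → ℝ),
      Continuous g → Continuous f → ∀ ε : ℝ, (∀ w, |g w - f w| ≤ ε) →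
      |∫ x, g x ∂ R - ∫ x, f x ∂ R| ≤ ε := by
    intro R hR g f hg hf ε hε
    haveI := hR
    rw [← integral_sub (hgint R inferInstance g hg) (hgint R inferInstance f hf),
      ← Real.norm_eq_abs]
    calc ‖∫ x, (g x - f x) ∂ R‖ ≤ ε * (R Set.univ).toReal :=
          norm_integral_le_of_norm_le_const (Filter.Eventually.of_forall fun w => by
            rw [Real.norm_eq_abs]; exact hε w)
      _ = ε := by simp
  -- equality of mean embeddings gives equality of integrals of continuous functions
  have hInt_eq : ∀ P Q : Measure Z, IsProbabilityMeasure P → IsProbabilityMeasure Q →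
      (∫ x, φ x ∂P) = (∫ x, φ x ∂Q) → ∀ g : Z → ℝ, Continuous g →
      ∫ x, g x ∂P = ∫ x, g x ∂Q := by
    intro P Q hP hQ hμ g hg
    have key : ∀ ε > (0:ℝ), |∫ x, g x ∂P - ∫ x, g x ∂Q| ≤ 0 + ε := by
      intro ε hε
      obtain ⟨n, c, z, hz⟩ := huniv g hg (ε/2) (by positivity)
      set f : Z → ℝ := fun w => ∑ i, c i * k (z i) w with hfdef
      have hfc : Continuous f := by
        apply continuous_finset_sum
        intro i _
        exact continuous_const.mul (hksec (z i))
      have hfPQ : ∫ x, f x ∂P = ∫ x, f x ∂Q := by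
        rw [hfdef]
        haveI := hP; haveI := hQ
        rw [hfsum P inferInstance n c z, hfsum Q inferInstance n c z, hμ]
      have h1 : |∫ x, g x ∂P - ∫ x, f x ∂P| ≤ ε/2 := hb P hP g f hg hfc (ε/2) hz
      have h2 : |∫ x, g x ∂Q - ∫ x, f x ∂Q| ≤ ε/2 := hb Q hQ g f hg hfc (ε/2) hz
      calc |∫ x, g x ∂P - ∫ x, g x ∂Q|
          = |(∫ x, g x ∂P - ∫ x, f x ∂P) - (∫ x, g x ∂Q - ∫ x, f x ∂Q)| := by
            rw [hfPQ]; ring_nf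
        _ ≤ |∫ x, g x ∂P - ∫ x, f x ∂P| + |∫ x, g x ∂Q - ∫ x, f x ∂Q| := abs_sub _ _
        _ ≤ ε/2 + ε/2 := add_le_add h1 h2
        _ = 0 + ε := by ring
    have h0 : |∫ x, g x ∂P - ∫ x, g x ∂Q| ≤ 0 := le_of_forall_pos_le_add key
    have := abs_nonneg (∫ x, g x ∂P - ∫ x, g x ∂Q)
    have habs : |∫ x, g x ∂P - ∫ x, g x ∂Q| = 0 := le_antisymm h0 this
    exact sub_eq_zero.mp (abs_eq_zero.mp habs)
  -- injectivity
  have hinj : ∀ P Q : Measure Z, IsProbabilityMeasure P → IsProbabilityMeasure Q →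
      (∫ x, φ x ∂P) = (∫ x, φ x ∂Q) → P = Q := by
    intro P Q hP hQ hμ
    have him := hInt_eq P Q hP hQ hμ
    haveI := hP; haveI := hQ
    refine ext_of_forall_lintegral_eq_of_IsFiniteMeasure ?_
    intro f
    have hfc : Continuous fun x => ((f x : ℝ)) :=
      NNReal.continuous_coe.comp f.continuous
    rw [lintegral_coe_eq_integral _ (hgint P inferInstance _ hfc),
      lintegral_coe_eq_integral _ (hgint Q inferInstance _ hfc), him _ hfc]
  refine ⟨hinj, ?_⟩
  intro Pseq P hPn hP
  haveI := hP
  haveI : ∀ n, IsProbabilityMeasure (Pseq n) := hPn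
  set μn : ℕ → H := fun n => ∫ x, φ x ∂(Pseq n) with hμn
  set μ0 : H := ∫ x, φ x ∂P with hμ0
  constructor
  · -- weak convergence implies MMD → 0
    intro hweak
    have hgoal : Tendsto μn atTop (nhds μ0) := by
      -- the mean embeddings live in a compact set
      have hrc : IsCompact (Set.range φ) := isCompact_range hφc
      set K := closure (convexHull ℝ (Set.range φ)) with hKdef
      have hKc : IsCompact K := TotallyBounded.isCompact_of_isClosed
        ((totallyBounded_convexHull.mpr hrc.totallyBounded).closure) isClosed_closure
      have hmem : ∀ (Q : Measure Z), IsProbabilityMeasure Q → (∫ x, φ x ∂Q) ∈ K := by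
        intro Q hQ
        haveI := hQ
        exact ((convex_convexHull ℝ _).closure).integral_mem isClosed_closure
          (Filter.Eventually.of_forall fun x =>
            subset_closure (subset_convexHull ℝ _ (Set.mem_range_self x)))
          (hφint Q inferInstance)
      -- inner ℝ products against kernel features converge
      have hips : ∀ y : Z, Tendsto (fun n => (inner ℝ (φ y) (μn n) : ℝ)) atTop
          (nhds (inner ℝ (φ y) μ0)) := by
        intro y
        have hgc : Continuous fun w => k y w := hksec y
        have hw := hweak _ hgc
        have heq : ∀ n, (inner ℝ (φ y) (μn n) : ℝ) = ∫ w, k y w ∂(Pseq n) := fun n =>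
          hsec (Pseq n) inferInstance y
        have heq0 : (inner ℝ (φ y) μ0 : ℝ) = ∫ w, k y w ∂P := hsec P inferInstance y
        rw [heq0]
        simpa only [heq] using hw
      -- closed span of the features
      set S := (Submodule.span ℝ (Set.range φ)).topologicalClosure with hSdef
      have hKS : K ⊆ (S : Set H) := by
        rw [hSdef, Submodule.topologicalClosure_coe, hKdef]
        exact closure_mono (convexHull_min Submodule.subset_span
          (Submodule.span ℝ (Set.range φ)).convex)
      -- convergence via subsequences
      apply tendsto_of_subseq_tendsto
      intro ns hns
      obtain ⟨L, hLK, ms, hms, hconv⟩ := hKc.tendsto_subseq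
        (x := fun i => μn (ns i)) (fun i => hmem _ (hPn _))
      refine ⟨ms, ?_⟩
      have hconv' : Tendsto (fun i => μn (ns (ms i))) atTop (nhds L) := hconv
      -- identify the limit
      have hLeq : ∀ y : Z, (inner ℝ (φ y) L : ℝ) = inner ℝ (φ y) μ0 := by
        intro y
        have h1 : Tendsto (fun i => (inner ℝ (φ y) (μn (ns (ms i))) : ℝ)) atTop
            (nhds (inner ℝ (φ y) L)) := tendsto_const_nhds.inner hconv'
        have h2 : Tendsto (fun i => (inner ℝ (φ y) (μn (ns (ms i))) : ℝ)) atTop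
            (nhds (inner ℝ (φ y) μ0)) :=
          (hips y).comp (hns.comp hms.tendsto_atTop)
        exact tendsto_nhds_unique h1 h2
      have hLS : L ∈ S := hKS hLK
      have hμS : μ0 ∈ S := hKS (hmem P hP)
      set v : H := L - μ0 with hvdef
      have hvS : v ∈ S := sub_mem hLS hμS
      have hspan : Submodule.span ℝ (Set.range φ) ≤ LinearMap.ker (innerSL ℝ v : H →ₗ[ℝ] ℝ) := by
        rw [Submodule.span_le]
        rintro _ ⟨y, rfl⟩
        have : (inner ℝ v (φ y) : ℝ) = 0 := by
          rw [real_inner_comm, hvdef, inner_sub_right, hLeq y, sub_self]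
        simpa [LinearMap.mem_ker] using this
      have hSker : S ≤ LinearMap.ker (innerSL ℝ v : H →ₗ[ℝ] ℝ) :=
        Submodule.topologicalClosure_minimal _ hspan
          (ContinuousLinearMap.isClosed_ker _)
      have hvv : (inner ℝ v v : ℝ) = 0 := by
        have := hSker hvS
        simpa [LinearMap.mem_ker] using this
      have hv0 : v = 0 := inner_self_eq_zero.mp hvv
      have hL0 : L = μ0 := sub_eq_zero.mp hv0
      rw [← hL0]
      exact hconv'
    rw [← tendsto_iff_norm_sub_tendsto_zero]
    exact hgoal
  · -- MMD → 0 implies weak convergence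
    intro hM g hg
    have hμt : Tendsto μn atTop (nhds μ0) := tendsto_iff_norm_sub_tendsto_zero.mpr hM
    rw [Metric.tendsto_atTop]
    intro ε hε
    obtain ⟨n, c, z, hz⟩ := huniv g hg (ε/4) (by positivity)
    set f : Z → ℝ := fun w => ∑ i, c i * k (z i) w with hfdef
    have hfc : Continuous f := by
      apply continuous_finset_sum
      intro i _
      exact continuous_const.mul (hksec (z i))
    set u : H := ∑ i, c i • φ (z i) with hudef
    have hfQ : ∀ (Q : Measure Z), IsProbabilityMeasure Q →
        ∫ x, f x ∂Q = (inner ℝ u (∫ x, φ x ∂Q) : ℝ) := by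
      intro Q hQ
      haveI := hQ
      rw [hfdef, hudef]
      exact hfsum Q inferInstance n c z
    have hconv : Tendsto (fun m => (inner ℝ u (μn m) : ℝ)) atTop (nhds (inner ℝ u μ0)) :=
      tendsto_const_nhds.inner hμt
    rw [Metric.tendsto_atTop] at hconv
    obtain ⟨N, hN⟩ := hconv (ε/4) (by positivity)
    refine ⟨N, fun m hm => ?_⟩
    have h1 : |∫ x, g x ∂(Pseq m) - ∫ x, f x ∂(Pseq m)| ≤ ε/4 :=
      hb (Pseq m) (hPn m) g f hg hfc (ε/4) hz
    have h2 : |∫ x, g x ∂P - ∫ x, f x ∂P| ≤ ε/4 := hb P hP g f hg hfc (ε/4) hz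
    have h3 : |∫ x, f x ∂(Pseq m) - ∫ x, f x ∂P| < ε/4 := by
      have := hN m hm
      rw [Real.dist_eq] at this
      rw [hfQ (Pseq m) (hPn m), hfQ P hP]
      exact this
    rw [Real.dist_eq]
    calc |∫ x, g x ∂(Pseq m) - ∫ x, g x ∂P|
        ≤ |∫ x, g x ∂(Pseq m) - ∫ x, f x ∂(Pseq m)|
          + |∫ x, f x ∂(Pseq m) - ∫ x, f x ∂P|
          + |∫ x, f x ∂P - ∫ x, g x ∂P| := by
          have := abs_sub_le (∫ x, g x ∂(Pseq m)) (∫ x, f x ∂(Pseq m)) (∫ x, g x ∂P)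
          have h4 := abs_sub_le (∫ x, f x ∂(Pseq m)) (∫ x, f x ∂P) (∫ x, g x ∂P)
          linarith
      _ < ε/4 + ε/4 + ε/4 := by
          have h2' : |∫ x, f x ∂P - ∫ x, g x ∂P| ≤ ε/4 := by rwa [abs_sub_comm]
          linarith
      _ < ε := by linarith
end
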